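/- arXiv:1511.05288 — 10 statements merged into one kernel-verified Lean document; each statement's English description precedes it below -/
import Mathlib

section
/- Let p be a prime, n and e positive integers, and define u(k) = e·ν_p(C(n,k)) + k on {1,...,n}. If i > ν_p(n), then u(p^i) > u(p^{ν_p(n)}) (whenever p^i ≤ n), and u(n) ≥ u(p^{ν_p(n)}). Consequently the minimum of u over {1,...,n} equals the minimum of u(p^i) over integers 0 ≤ i ≤ ν_p(n). -/
/-!
Write `ν = ν_p(n)`. By Kummer's digit-sum formula, `ν_p(C(p^j m, p^j)) = ν_p(C(m, 1)) = ν_p(m)`,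
so `ν_p(C(n, p^j)) = ν - j` for `j ≤ ν`; in particular `u(p^ν) = p^ν`, which gives the two
inequalities. For the minimum, `ν ≤ ν_p(C(n,k)) + ν_p(k)` shows that `u(k) ≥ u(p^j)` for
`j = min(ν_p(k), ν)`.
-/

theorem Nat.digits_sum_base_pow_mul {b : ℕ} (hb : 1 < b) (j m : ℕ) :
    (b.digits (b ^ j * m)).sum = (b.digits m).sum := by
  rcases m.eq_zero_or_pos with rfl | hm
  · simp
  · simp [Nat.digits_base_pow_mul hb hm]

-- Multiplying by `p ^ j` only prepends `j` zero digits, so Kummer's digit sums are unchanged.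
theorem padicValNat_choose_pow_mul_pow_mul {p : ℕ} [hp : Fact p.Prime] (j : ℕ) {m k : ℕ}
    (hkm : k ≤ m) :
    padicValNat p ((p ^ j * m).choose (p ^ j * k)) = padicValNat p (m.choose k) := by
  have hb := hp.out.one_lt
  refine Nat.eq_of_mul_eq_mul_left (Nat.sub_pos_of_lt hb) ?_
  rw [sub_one_mul_padicValNat_choose_eq_sub_sum_digits (Nat.mul_le_mul_left _ hkm),
    sub_one_mul_padicValNat_choose_eq_sub_sum_digits hkm, ← Nat.mul_sub,
    Nat.digits_sum_base_pow_mul hb, Nat.digits_sum_base_pow_mul hb,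
    Nat.digits_sum_base_pow_mul hb]

theorem Nat.factorization_choose_pow {p n j : ℕ} (hp : p.Prime) (hn : n ≠ 0)
    (hj : j ≤ n.factorization p) :
    (n.choose (p ^ j)).factorization p = n.factorization p - j := by
  have := Fact.mk hp
  obtain ⟨m, rfl⟩ := (hp.pow_dvd_iff_le_factorization hn).2 hj
  have hm : m ≠ 0 := right_ne_zero_of_mul hn
  have hchoose := padicValNat_choose_pow_mul_pow_mul (p := p) j (Nat.one_le_iff_ne_zero.2 hm)
  rw [mul_one, Nat.choose_one_right] at hchoose
  simp only [Nat.factorization_def _ hp, hchoose, padicValNat.mul (pow_ne_zero j hp.ne_zero) hm,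
    padicValNat.prime_pow, Nat.add_sub_cancel_left]

theorem Nat.exists_choose_pow_weight_le {p n : ℕ} (hp : p.Prime) (e : ℕ) {k : ℕ} (hk : k ≠ 0)
    (hkn : k ≤ n) :
    ∃ j ≤ n.factorization p, e * (n.choose (p ^ j)).factorization p + p ^ j
      ≤ e * (n.choose k).factorization p + k := by
  have hn : n ≠ 0 := by omega
  set j := min (k.factorization p) (n.factorization p)
  have hval : n.factorization p ≤ (n.choose k).factorization p + k.factorization p :=
    Nat.factorization_le_factorization_choose_add hkn hk
  refine ⟨j, min_le_right _ _, Nat.add_le_add (Nat.mul_le_mul_left e ?_) ?_⟩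
  · rw [Nat.factorization_choose_pow hp hn (min_le_right _ _)]
    omega
  · calc p ^ j ≤ p ^ k.factorization p := Nat.pow_le_pow_right hp.pos (min_le_left _ _)
      _ ≤ k := Nat.ordProj_le p hk

theorem stmt_4_general (p n e : ℕ) (hp : p.Prime) (hn : 0 < n) :
    (∀ i : ℕ, n.factorization p < i → p ^ i ≤ n →
        e * ((n.choose (p ^ (n.factorization p))).factorization p) + p ^ (n.factorization p)
          < e * ((n.choose (p ^ i)).factorization p) + p ^ i) ∧
    (e * ((n.choose (p ^ (n.factorization p))).factorization p) + p ^ (n.factorization p)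
        ≤ e * ((n.choose n).factorization p) + n) ∧
    sInf ((fun k => e * ((n.choose k).factorization p) + k) '' Set.Icc 1 n)
      = sInf ((fun i => e * ((n.choose (p ^ i)).factorization p) + p ^ i) ''
          Set.Icc 0 (n.factorization p)) := by
  set ν := n.factorization p
  have hchoose : (n.choose (p ^ ν)).factorization p = 0 := by
    rw [Nat.factorization_choose_pow hp hn.ne' le_rfl, Nat.sub_self]
  have hpow_le : ∀ i ≤ ν, p ^ i ≤ n := fun i hi =>
    (Nat.pow_le_pow_right hp.pos hi).trans (Nat.ordProj_le p hn.ne')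
  refine ⟨fun i hi _ => ?_, ?_, ?_⟩
  · rw [hchoose, mul_zero, zero_add]
    exact (Nat.pow_lt_pow_right hp.one_lt hi).trans_le le_add_self
  · rw [hchoose, mul_zero, zero_add]
    exact (hpow_le ν le_rfl).trans le_add_self
  · refine le_antisymm (csInf_le_csInf (OrderBot.bddBelow _) ⟨_, ν, ⟨Nat.zero_le _, le_rfl⟩, rfl⟩ ?_)
      (le_csInf ⟨_, n, ⟨hn, le_rfl⟩, rfl⟩ ?_)
    · rintro _ ⟨i, ⟨-, hi⟩, rfl⟩
      exact ⟨p ^ i, ⟨Nat.one_le_pow _ _ hp.pos, hpow_le i hi⟩, rfl⟩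
    · rintro _ ⟨k, ⟨hk, hkn⟩, rfl⟩
      obtain ⟨j, hj, hle⟩ := Nat.exists_choose_pow_weight_le hp e (Nat.one_le_iff_ne_zero.1 hk) hkn
      exact le_trans (csInf_le (OrderBot.bddBelow _) ⟨j, ⟨Nat.zero_le _, hj⟩, rfl⟩) hle

/-- For `p` prime, `n, e` positive, and `u(k) = e·ν_p(C(n,k)) + k` on `{1,…,n}`:
if `i > ν_p(n)` and `p^i ≤ n` then `u(p^i) > u(p^{ν_p(n)})`; moreover `u(n) ≥ u(p^{ν_p(n)})`;
consequently the minimum of `u` over `{1,…,n}` equals the minimum of `u(p^i)` over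
`0 ≤ i ≤ ν_p(n)`. -/
theorem stmt_4 (p n e : ℕ) (hp : p.Prime) (hn : 0 < n) (he : 0 < e) :
    (∀ i : ℕ, n.factorization p < i → p ^ i ≤ n →
        e * ((n.choose (p ^ (n.factorization p))).factorization p) + p ^ (n.factorization p)
          < e * ((n.choose (p ^ i)).factorization p) + p ^ i) ∧
    (e * ((n.choose (p ^ (n.factorization p))).factorization p) + p ^ (n.factorization p)
        ≤ e * ((n.choose n).factorization p) + n) ∧
    sInf ((fun k => e * ((n.choose k).factorization p) + k) '' Set.Icc 1 n)
      = sInf ((fun i => e * ((n.choose (p ^ i)).factorization p) + p ^ i) ''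
          Set.Icc 0 (n.factorization p)) :=
  stmt_4_general p n e hp hn
end

section
/- Let p be a prime and e a positive integer such that e/(p−1) is not a power of p (i.e., log_p(e/(p−1)) is not an integer). Let n be a positive integer and set v_p = ν_p(n). Define g(i) = e·(v_p − i) + p^i for integers 0 ≤ i ≤ v_p. Then g attains its minimum on {0,...,v_p} at a unique point, namely at i = ⌈log_p(e/(p−1))⌉ if ⌈log_p(e/(p−1))⌉ ≤ v_p, and at i = v_p otherwise. -/
private lemma step_dec (p e v j : ℕ) (hp : 1 ≤ p) (hj : j + 1 ≤ v)
    (h : (p - 1) * p ^ j < e) :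
    e * (v - (j+1)) + p ^ (j+1) < e * (v - j) + p ^ j := by
  have h1 : v - j = (v - (j+1)) + 1 := by omega
  have h2 : p ^ (j+1) = (p-1) * p ^ j + p ^ j := by
    have hq : p - 1 + 1 = p := Nat.succ_pred_eq_of_pos hp
    calc p ^ (j+1) = p * p ^ j := by ring
      _ = ((p-1)+1) * p ^ j := by rw [hq]
      _ = (p-1) * p ^ j + p ^ j := by ring
  rw [h1, h2, Nat.mul_add, Nat.mul_one]
  linarith

private lemma step_inc (p e v j : ℕ) (hp : 1 ≤ p) (hj : j + 1 ≤ v)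
    (h : e < (p - 1) * p ^ j) :
    e * (v - j) + p ^ j < e * (v - (j+1)) + p ^ (j+1) := by
  have h1 : v - j = (v - (j+1)) + 1 := by omega
  have h2 : p ^ (j+1) = (p-1) * p ^ j + p ^ j := by
    have hq : p - 1 + 1 = p := Nat.succ_pred_eq_of_pos hp
    calc p ^ (j+1) = p * p ^ j := by ring
      _ = ((p-1)+1) * p ^ j := by rw [hq]
      _ = (p-1) * p ^ j + p ^ j := by ring
  rw [h1, h2, Nat.mul_add, Nat.mul_one]
  linarith

private lemma chain_dec (p e v a : ℕ) (hp : 1 ≤ p) :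
    ∀ b, a + 1 ≤ b → b ≤ v →
    (∀ j, a ≤ j → j < b → (p - 1) * p ^ j < e) →
    e * (v - b) + p ^ b < e * (v - a) + p ^ a := by
  refine Nat.le_induction ?_ ?_
  · intro hv h
    exact step_dec p e v a hp hv (h a le_rfl (by omega))
  · intro b hb ih hv h
    have h1 := step_dec p e v b hp hv (h b (by omega) (by omega))
    have h2 := ih (by omega) (fun j hj hj' => h j hj (by omega))
    exact lt_trans h1 h2

private lemma chain_inc (p e v a : ℕ) (hp : 1 ≤ p) :
    ∀ b, a + 1 ≤ b → b ≤ v →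
    (∀ j, a ≤ j → j < b → e < (p - 1) * p ^ j) →
    e * (v - a) + p ^ a < e * (v - b) + p ^ b := by
  refine Nat.le_induction ?_ ?_
  · intro hv h
    exact step_inc p e v a hp hv (h a le_rfl (by omega))
  · intro b hb ih hv h
    have h1 := step_inc p e v b hp hv (h b (by omega) (by omega))
    have h2 := ih (by omega) (fun j hj hj' => h j hj (by omega))
    exact lt_trans h2 h1

/-- Let `p` be prime and `e` positive with `e/(p−1)` not a power of `p`, `n` positive,
`v = ν_p(n)`, and `g(i) = e·(v − i) + p^i` for `0 ≤ i ≤ v`. Let `c` be the least natural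
number with `(p−1)·p^c ≥ e` (i.e. `c = ⌈log_p(e/(p−1))⌉`). Then `g` attains its minimum on
`{0,…,v}` at the unique point `i₀ = min c v` (that is, at `c` if `c ≤ v`, at `v` otherwise). -/
theorem stmt_5 (p e n c : ℕ) (hp : p.Prime) (he : 0 < e) (hn : 0 < n)
    (hpow : ∀ k : ℕ, e ≠ (p - 1) * p ^ k)
    (hc : e ≤ (p - 1) * p ^ c) (hcmin : ∀ k, k < c → ¬ e ≤ (p - 1) * p ^ k) :
    ∀ i ≤ n.factorization p, i ≠ min c (n.factorization p) →
      e * (n.factorization p - min c (n.factorization p)) + p ^ (min c (n.factorization p))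
        < e * (n.factorization p - i) + p ^ i := by
  intro i hi hne
  set v := n.factorization p with hv
  set m := min c v with hm
  have hp1 : 1 ≤ p := hp.one_lt.le
  have hmv : m ≤ v := min_le_right _ _
  rcases lt_or_gt_of_ne hne with hlt | hgt
  · -- i < m : g decreasing on [i, m]
    exact chain_dec p e v i hp1 m (by omega) hmv
      (fun j hj hj' => by
        have : j < c := lt_of_lt_of_le hj' (min_le_left _ _)
        have := hcmin j this
        omega)
  · -- m < i ≤ v : then m = c and g increasing on [m, i]
    have hcle : m = c := by
      rcases min_cases c v with ⟨h1, _⟩ | ⟨h1, h2⟩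
      · exact h1
      · omega
    exact chain_inc p e v m hp1 i (by omega) hi
      (fun j hj hj' => by
        have hle : (p - 1) * p ^ c ≤ (p - 1) * p ^ j :=
          Nat.mul_le_mul_left _ (Nat.pow_le_pow_right hp1 (by omega))
        have := hpow j
        omega)
end

section
/- Let A be a complete discrete valuation ring with maximal ideal 𝔭 and finite residue field, and let n be a positive integer. Let H_n be the ideal of A generated by all elements of the form x^n − 1 with x a unit of A. Then an ideal I of A is n-congruing (i.e., for every a ∈ A there exists N ∈ ℕ with a^N·(a^n − 1) ∈ I) if and only if I contains H_n. -/
/-!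
A nonzero nonunit `π` whose multiples are exactly the nonunits makes `1 + π ^ (k + 1)` an
injective family of units, so `Aˣ` is infinite and, `A` being a domain, some unit `x` has
`x ^ n ≠ 1`. By `(π)`-adic separatedness the nonzero element `x ^ n - 1` of `H_n` is `π ^ k` times
a unit, so `π ^ k ∈ H_n`. Hence if `H_n ≤ I`, every nonunit `a = c π` has `a ^ k ∈ I`, while for a
unit `a` already `a ^ n - 1 ∈ H_n`. Conversely `a ^ N (a ^ n - 1) ∈ I` with `a` a unit gives
`a ^ n - 1 ∈ I`.
-/

open Ideal

variable {A : Type*} [CommRing A]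

def unitsPowSubOneIdeal (A : Type*) [CommRing A] (n : ℕ) : Ideal A :=
  span {y | ∃ x : Aˣ, y = (x : A) ^ n - 1}

lemma unitsPowSubOneIdeal_le_of_forall {n : ℕ} {I : Ideal A}
    (hI : ∀ a : A, ∃ N : ℕ, a ^ N * (a ^ n - 1) ∈ I) : unitsPowSubOneIdeal A n ≤ I := by
  rw [unitsPowSubOneIdeal, span_le]
  rintro _ ⟨x, rfl⟩
  obtain ⟨N, hN⟩ := hI x
  exact (unit_mul_mem_iff_mem I (x.isUnit.pow N)).mp hN

section LocalPrincipal

variable {π : A} (hmax : ∀ a : A, a ∉ span {π} → IsUnit a)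
include hmax

lemma forall_pow_mul_pow_sub_one_mem {n k : ℕ} {I : Ideal A} (hk : π ^ k ∈ I)
    (hH : unitsPowSubOneIdeal A n ≤ I) (a : A) : ∃ N : ℕ, a ^ N * (a ^ n - 1) ∈ I := by
  by_cases ha : a ∈ span {π}
  · obtain ⟨c, rfl⟩ := mem_span_singleton'.mp ha
    exact ⟨k, I.mul_mem_right _ (by rw [mul_pow]; exact I.mul_mem_left _ hk)⟩
  · exact ⟨0, by simpa using hH (subset_span ⟨(hmax a ha).unit, rfl⟩)⟩

lemma isUnit_one_add_mul (hπu : ¬IsUnit π) (c : A) : IsUnit (1 + π * c) := by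
  refine hmax _ fun hmem => hπu ?_
  rw [← span_singleton_eq_top, eq_top_iff_one]
  simpa using sub_mem hmem (mul_mem_right c _ (mem_span_singleton_self π))

lemma infinite_units_of_not_isUnit [IsDomain A] (hπ0 : π ≠ 0) (hπu : ¬IsUnit π) :
    Infinite Aˣ :=
  Infinite.of_injective (fun k : ℕ => (isUnit_one_add_mul hmax hπu (π ^ k)).unit)
    fun i j hij => by
      have hval := congrArg Units.val hij
      simp only [IsUnit.unit_spec, add_right_inj] at hval
      exact pow_injective_of_not_isUnit hπu hπ0 (mul_left_cancel₀ hπ0 hval)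

lemma exists_eq_pow_mul_isUnit [IsHausdorff (span {π}) A] {a : A} (ha : a ≠ 0) :
    ∃ (k : ℕ) (u : A), IsUnit u ∧ a = π ^ k * u := by
  have hfin : FiniteMultiplicity π a := by
    by_contra! hdvd
    refine ha (IsHausdorff.haus ‹_› a fun k => ?_)
    rw [SModEq.zero, smul_eq_mul, mul_top, span_singleton_pow, mem_span_singleton]
    exact (pow_dvd_pow π k.le_succ).trans (hdvd k)
  obtain ⟨c, hc, hπc⟩ := hfin.exists_eq_pow_mul_and_not_dvd
  exact ⟨_, c, hmax c (mt mem_span_singleton.mp hπc), hc⟩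

end LocalPrincipal

lemma exists_unit_pow_ne_one [IsDomain A] [Infinite Aˣ] {n : ℕ} (hn : n ≠ 0) :
    ∃ x : Aˣ, x ^ n ≠ 1 := by
  have : NeZero n := ⟨hn⟩
  by_contra! h
  have : Finite Aˣ :=
    Finite.of_surjective (fun x : rootsOfUnity n A => (x : Aˣ)) fun x => ⟨⟨x, h x⟩, rfl⟩
  exact not_finite Aˣ

lemma exists_pow_mem_unitsPowSubOneIdeal [IsDomain A] {π : A} [IsHausdorff (span {π}) A]
    (hπ0 : π ≠ 0) (hπu : ¬IsUnit π) (hmax : ∀ a : A, a ∉ span {π} → IsUnit a) {n : ℕ}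
    (hn : n ≠ 0) : ∃ k : ℕ, π ^ k ∈ unitsPowSubOneIdeal A n := by
  have := infinite_units_of_not_isUnit hmax hπ0 hπu
  obtain ⟨x, hx⟩ := exists_unit_pow_ne_one (A := A) hn
  have hne : (x : A) ^ n - 1 ≠ 0 := sub_ne_zero.mpr (by simpa using Units.val_eq_one.not.mpr hx)
  obtain ⟨k, u, hu, hxu⟩ := exists_eq_pow_mul_isUnit hmax hne
  refine ⟨k, (mul_unit_mem_iff_mem _ hu).mp ?_⟩
  rw [← hxu]
  exact subset_span ⟨x, rfl⟩

theorem stmt_7_general {A : Type} [CommRing A] [IsDomain A] (π : A) (hπ0 : π ≠ 0)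
    (hπu : ¬ IsUnit π) (hmax : ∀ a : A, a ∉ Ideal.span {π} → IsUnit a)
    [IsAdicComplete (Ideal.span {π}) A]
    (n : ℕ) (hn : 0 < n) (I : Ideal A) :
    (∀ a : A, ∃ N : ℕ, a ^ N * (a ^ n - 1) ∈ I) ↔
      Ideal.span {y : A | ∃ x : Aˣ, y = (x : A) ^ n - 1} ≤ I := by
  obtain ⟨k, hk⟩ := exists_pow_mem_unitsPowSubOneIdeal hπ0 hπu hmax hn.ne'
  exact ⟨unitsPowSubOneIdeal_le_of_forall,
    fun hH => forall_pow_mul_pow_sub_one_mem hmax (hH hk) hH⟩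

/-- Let `A` be a complete discrete valuation ring (here: a domain with a nonzero non-unit
`π` generating the maximal ideal, complete in the `(π)`-adic topology) with finite residue
field, and let `n` be a positive integer. Let `H_n` be the ideal generated by all `x^n − 1`
with `x` a unit. Then an ideal `I` is `n`-congruing (for every `a` there is `N` with
`a^N·(a^n − 1) ∈ I`) if and only if `H_n ≤ I`. -/
theorem stmt_7 {A : Type} [CommRing A] [IsDomain A] (π : A) (hπ0 : π ≠ 0)
    (hπu : ¬ IsUnit π) (hmax : ∀ a : A, a ∉ Ideal.span {π} → IsUnit a)
    [IsAdicComplete (Ideal.span {π}) A] [Finite (A ⧸ Ideal.span {π})]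
    (n : ℕ) (hn : 0 < n) (I : Ideal A) :
    (∀ a : A, ∃ N : ℕ, a ^ N * (a ^ n - 1) ∈ I) ↔
      Ideal.span {y : A | ∃ x : Aˣ, y = (x : A) ^ n - 1} ≤ I :=
  stmt_7_general π hπ0 hπu hmax n hn I
end

section
/- Let A be a Dedekind domain with finite residue fields such that for each N ∈ ℕ only finitely many maximal ideals have residue field of cardinality < N (a 'Minkowski' Dedekind domain). Let n be a positive integer. Then for all but finitely many maximal ideals 𝔭 of A, the ideal of the completion Â_𝔭 generated by {x^n − 1 : x ∈ Â_𝔭^×} is the unit ideal. More precisely, if n is not divisible by N(𝔭) − 1, where N(𝔭) is the cardinality of A/𝔭, then some x ∈ Â_𝔭^× has x^n − 1 a unit. -/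
/-!
Reduce modulo `𝔭`: the unit group of the finite field `A/𝔭` is cyclic of order `N(𝔭) - 1`, so
when this does not divide `n` there is `a ∈ A` with `a ∉ 𝔭` and `a ^ n - 1 ∉ 𝔭`. Such elements are
units in every `A/𝔭^k`, hence in `Â_𝔭`, and `x = a` is the required unit. Since `N(𝔭) - 1 ∤ n`
as soon as `N(𝔭) ≥ n + 2`, the Minkowski condition leaves only finitely many exceptions.
-/

theorem FiniteField.exists_pow_ne_one_of_not_dvd {F : Type*} [Field F] [Finite F] {n : ℕ}
    (h : ¬ (Nat.card F - 1) ∣ n) : ∃ g : Fˣ, g ^ n ≠ 1 := by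
  by_contra! hg
  rw [← Nat.card_units, ← IsCyclic.exponent_eq_card] at h
  exact h (Monoid.exponent_dvd_of_forall_pow_eq_one hg)

namespace AdicCompletion

variable {R : Type*} [CommRing R] {I : Ideal R}

theorem isUnit_of_forall_isUnit_evalₐ {x : AdicCompletion I R} (h : ∀ n, IsUnit (evalₐ I n x)) :
    IsUnit x := by
  have hval (n : ℕ) : IsUnit (x.val n) := by
    have hI : (I ^ n • ⊤ : Ideal R) = I ^ n := by ext; simp
    exact (isUnit_map_iff (Ideal.quotientEquivAlgOfEq R hI) _).mp (h n)
  let y : AdicCompletion I R := ⟨fun n ↦ ((hval n).unit⁻¹ : _), fun {m n} hmn ↦ by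
    refine (hval m).mul_left_cancel ?_
    calc x.val m * transitionMap I R hmn ((hval n).unit⁻¹ : _)
        = transitionMapₐ I hmn (x.val n * ((hval n).unit⁻¹ : _)) := by
          rw [map_mul, ← x.property hmn]; rfl
      _ = x.val m * ((hval m).unit⁻¹ : _) := by
          rw [(hval n).mul_val_inv, (hval m).mul_val_inv, map_one]⟩
  exact .of_mul_eq_one y (ext fun n ↦ (hval n).mul_val_inv)

theorem isUnit_algebraMap_of_notMem [I.IsMaximal] {a : R} (ha : a ∉ I) :
    IsUnit (algebraMap R (AdicCompletion I R) a) :=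
  isUnit_of_forall_isUnit_evalₐ fun _ ↦ by
    rw [algebraMap_apply, Algebra.algebraMap_self, RingHom.id_apply, evalₐ_of]
    exact Ideal.Quotient.isUnit_mk_pow_of_notMem I ha

theorem exists_unit_isUnit_pow_sub_one (I : Ideal R) [I.IsMaximal] [Finite (R ⧸ I)] {n : ℕ}
    (h : ¬ (Nat.card (R ⧸ I) - 1) ∣ n) :
    ∃ x : (AdicCompletion I R)ˣ, IsUnit ((x : AdicCompletion I R) ^ n - 1) := by
  let := Ideal.Quotient.field I
  obtain ⟨g, hg⟩ := FiniteField.exists_pow_ne_one_of_not_dvd h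
  obtain ⟨a, ha⟩ := Ideal.Quotient.mk_surjective (g : R ⧸ I)
  have ha_notMem : a ∉ I := by
    rw [← Ideal.Quotient.eq_zero_iff_mem, ha]
    exact g.ne_zero
  have han_notMem : a ^ n - 1 ∉ I := by
    rw [← Ideal.Quotient.eq_zero_iff_mem, map_sub, map_pow, map_one, ha, sub_eq_zero]
    exact fun hgn ↦ hg (Units.ext (by simpa using hgn))
  refine ⟨(isUnit_algebraMap_of_notMem ha_notMem).unit, ?_⟩
  simpa using isUnit_algebraMap_of_notMem han_notMem

end AdicCompletion

theorem stmt_9_general {A : Type} [CommRing A]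
    (hfin : ∀ 𝔭 : MaximalSpectrum A, Finite (A ⧸ 𝔭.asIdeal))
    (hmink : ∀ N : ℕ, {𝔭 : MaximalSpectrum A | Nat.card (A ⧸ 𝔭.asIdeal) < N}.Finite)
    (n : ℕ) (hn : 0 < n) :
    {𝔭 : MaximalSpectrum A |
        Ideal.span {y : AdicCompletion 𝔭.asIdeal A |
          ∃ x : (AdicCompletion 𝔭.asIdeal A)ˣ,
            y = (x : AdicCompletion 𝔭.asIdeal A) ^ n - 1} ≠ ⊤}.Finite ∧
    ∀ 𝔭 : MaximalSpectrum A, ¬ (Nat.card (A ⧸ 𝔭.asIdeal) - 1) ∣ n →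
      ∃ x : (AdicCompletion 𝔭.asIdeal A)ˣ,
        IsUnit ((x : AdicCompletion 𝔭.asIdeal A) ^ n - 1) := by
  have key (𝔭 : MaximalSpectrum A) (h𝔭 : ¬ (Nat.card (A ⧸ 𝔭.asIdeal) - 1) ∣ n) :
      ∃ x : (AdicCompletion 𝔭.asIdeal A)ˣ, IsUnit ((x : AdicCompletion 𝔭.asIdeal A) ^ n - 1) :=
    have := hfin 𝔭
    AdicCompletion.exists_unit_isUnit_pow_sub_one 𝔭.asIdeal h𝔭
  refine ⟨(hmink (n + 2)).subset fun 𝔭 h𝔭 ↦ ?_, key⟩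
  change Nat.card _ < n + 2
  by_contra! hlarge
  obtain ⟨x, hx⟩ := key 𝔭 (Nat.not_dvd_of_pos_of_lt hn (by omega))
  exact h𝔭 (Ideal.eq_top_of_isUnit_mem _ (Ideal.subset_span ⟨x, rfl⟩) hx)

/-- Let `A` be a Minkowski Dedekind domain (finite residue fields; only finitely many
maximal ideals of norm below any bound) and `n` a positive integer. Then for all but
finitely many maximal ideals `𝔭`, the ideal of `Â_𝔭` generated by `{x^n − 1 : x unit}` is
the unit ideal; more precisely, if `N(𝔭) − 1 ∤ n` then some unit `x` of `Â_𝔭` has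
`x^n − 1` a unit. -/
theorem stmt_9 {A : Type} [CommRing A] [IsDomain A] [IsDedekindDomain A]
    (hfin : ∀ 𝔭 : MaximalSpectrum A, Finite (A ⧸ 𝔭.asIdeal))
    (hmink : ∀ N : ℕ, {𝔭 : MaximalSpectrum A | Nat.card (A ⧸ 𝔭.asIdeal) < N}.Finite)
    (n : ℕ) (hn : 0 < n) :
    {𝔭 : MaximalSpectrum A |
        Ideal.span {y : AdicCompletion 𝔭.asIdeal A |
          ∃ x : (AdicCompletion 𝔭.asIdeal A)ˣ,
            y = (x : AdicCompletion 𝔭.asIdeal A) ^ n - 1} ≠ ⊤}.Finite ∧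
    ∀ 𝔭 : MaximalSpectrum A, ¬ (Nat.card (A ⧸ 𝔭.asIdeal) - 1) ∣ n →
      ∃ x : (AdicCompletion 𝔭.asIdeal A)ˣ,
        IsUnit ((x : AdicCompletion 𝔭.asIdeal A) ^ n - 1) :=
  stmt_9_general hfin hmink n hn
end

section
/- Let A be a Minkowski Dedekind domain (finite residue fields, and only finitely many maximal ideals of bounded norm) and n a positive integer. Then there exists a unique minimal n-congruing ideal of A: namely, the kernel of the ring map pr_n : A → ∏_𝔭 Â_𝔭/H_n^𝔭 (product over maximal ideals 𝔭, where H_n^𝔭 is the ideal of Â_𝔭 generated by x^n − 1 for units x) is contained in every n-congruing ideal of A, and is itself n-congruing. -/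
/-!
Write `K_𝔭 ⊆ A` for the preimage of `H_n^𝔭`, so that the kernel of `pr_n` is `⋂_𝔭 K_𝔭`.
If `𝔭^e` is `n`-congruing, every unit `u` of `A/𝔭^e` satisfies `u^N (u^n - 1) = 0`, hence
`u^n = 1`; applied to the image of a unit of `Â_𝔭` this gives `K_𝔭 ⊆ 𝔭^e`. Since an ideal of a
Dedekind domain is the intersection of the prime powers containing it, the kernel lies in every
`n`-congruing ideal.

Conversely `a ∉ 𝔭` is a unit of `Â_𝔭`, so `a^n - 1 ∈ K_𝔭`. Moreover `K_𝔭` contains every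
`(1 + t)^n - 1` with `t ∈ 𝔭`: these make `K_𝔭` nonzero and keep it out of every other maximal
ideal, so `𝔭^k ⊆ K_𝔭` for some `k`. A nonzero `a` lies in only finitely many `𝔭`, and taking `N`
larger than the corresponding `k` gives `a^N (a^n - 1) ∈ K_𝔭` for all `𝔭`.
-/

open Filter UniqueFactorizationMonoid

variable {A : Type*} [CommRing A]

def Ideal.IsCongruing (n : ℕ) (I : Ideal A) : Prop :=
  ∀ a : A, ∃ N : ℕ, a ^ N * (a ^ n - 1) ∈ I

namespace Ideal.IsCongruing

variable {n : ℕ} {I I' : Ideal A}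

theorem mono (hI : I.IsCongruing n) (h : I ≤ I') : I'.IsCongruing n :=
  fun a => (hI a).imp fun _ ha => h ha

theorem pow_eq_one_of_isUnit (hI : I.IsCongruing n) {u : A ⧸ I} (hu : IsUnit u) : u ^ n = 1 := by
  obtain ⟨a, rfl⟩ := Ideal.Quotient.mk_surjective u
  obtain ⟨N, hN⟩ := hI a
  rw [← Ideal.Quotient.eq_zero_iff_mem, map_mul, map_sub, map_pow, map_pow, map_one] at hN
  exact sub_eq_zero.mp ((hu.pow N).mul_right_eq_zero.mp hN)

end Ideal.IsCongruing

theorem Ideal.exists_one_add_pow_ne_one [IsDomain A] {P : Ideal A} {n : ℕ} (hP : P ≠ ⊥)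
    (hP' : P ≠ ⊤) (hn : 0 < n) :
    ∃ t ∈ P, (1 + t) ^ n ≠ 1 := by
  classical
  obtain ⟨t, htP, ht0⟩ := Submodule.exists_mem_ne_zero_of_ne_bot hP
  have htu : ¬IsUnit t := fun hu => hP' (P.eq_top_of_isUnit_mem htP hu)
  have hinj : Function.Injective fun j : ℕ => 1 + t ^ (j + 1) := fun i j hij =>
    Nat.succ_injective (pow_injective_of_not_isUnit htu ht0 (add_left_cancel hij))
  by_contra! hroot
  refine Set.infinite_range_of_injective hinj
    ((Polynomial.nthRoots n (1 : A)).toFinset.finite_toSet.subset ?_)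
  rintro _ ⟨j, rfl⟩
  simpa [Polynomial.mem_nthRoots hn] using hroot _ (P.pow_mem_of_mem htP _ j.succ_pos)

namespace AdicCompletion

variable (P : Ideal A) (n : ℕ)

/-- The ideal `H_n^P` of `Â_P`. -/
noncomputable def powSubOneIdeal : Ideal (AdicCompletion P A) :=
  Ideal.span {y : AdicCompletion P A |
    ∃ x : (AdicCompletion P A)ˣ, y = (x : AdicCompletion P A) ^ n - 1}

/-- The kernel of `A → Â_P ⧸ H_n^P`. -/
noncomputable def powSubOneKer : Ideal A :=
  (powSubOneIdeal P n).comap (algebraMap A (AdicCompletion P A))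

variable {P n}

theorem isUnit_algebraMap_of_isUnit_mk (hP : P.FG) {a : A} (ha : IsUnit (Ideal.Quotient.mk P a)) :
    IsUnit (algebraMap A (AdicCompletion P A) a) := by
  obtain ⟨c, hc⟩ := ha.exists_right_inv
  obtain ⟨b, rfl⟩ := Ideal.Quotient.mk_surjective c
  have hab : a * b - 1 ∈ P := Ideal.Quotient.eq.mp (by rw [map_mul, hc, map_one])
  have := isAdicComplete_self P hP
  have hjac : algebraMap A (AdicCompletion P A) (a * b) - 1 ∈ (⊥ : Ideal _).jacobson := by
    rw [← map_one (algebraMap A _), ← map_sub]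
    exact IsAdicComplete.le_jacobson_bot _ (Ideal.mem_map_of_mem _ hab)
  rw [map_mul] at hjac
  exact isUnit_of_mul_isUnit_left (Ideal.isUnit_of_sub_one_mem_jacobson_bot _ hjac)

theorem pow_sub_one_mem_powSubOneKer (hP : P.FG) {a : A}
    (ha : IsUnit (Ideal.Quotient.mk P a)) :
    a ^ n - 1 ∈ powSubOneKer P n := by
  obtain ⟨x, hx⟩ := isUnit_algebraMap_of_isUnit_mk hP ha
  rw [powSubOneKer, Ideal.mem_comap, map_sub, map_pow, map_one, ← hx]
  exact Ideal.subset_span ⟨x, rfl⟩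

theorem powSubOneKer_le_pow {e : ℕ} (he : (P ^ e).IsCongruing n) :
    powSubOneKer P n ≤ P ^ e := by
  have hker : powSubOneIdeal P n ≤ RingHom.ker (evalₐ P e) := by
    rw [powSubOneIdeal, Ideal.span_le]
    rintro _ ⟨x, rfl⟩
    simp [he.pow_eq_one_of_isUnit (x.isUnit.map (evalₐ P e))]
  intro a ha
  have := hker ha
  rwa [RingHom.mem_ker, AlgHom.commutes, Ideal.Quotient.algebraMap_eq,
    Ideal.Quotient.eq_zero_iff_mem] at this

theorem sup_ne_top_of_powSubOneKer_le (hP : P.FG) (hn : 0 < n) {Q : Ideal A}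
    (hQ : Q ≠ ⊤) (hle : powSubOneKer P n ≤ Q) :
    P ⊔ Q ≠ ⊤ := by
  intro htop
  obtain ⟨t, ht, s, hs, hts⟩ := Submodule.mem_sup.mp (htop ▸ Submodule.mem_top : (1 : A) ∈ P ⊔ Q)
  have hs1 : Ideal.Quotient.mk P s = 1 := by
    rw [← map_one (Ideal.Quotient.mk P), Ideal.Quotient.eq, ← hts]
    simpa using ht
  have hsn := hle (pow_sub_one_mem_powSubOneKer hP (hs1 ▸ isUnit_one))
  exact hQ ((Ideal.eq_top_iff_one Q).mpr (by
    simpa using Q.sub_mem (Ideal.pow_mem_of_mem Q hs n hn) hsn))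

variable [IsDedekindDomain A]

theorem exists_pow_le_powSubOneKer (hP : P.IsMaximal) (hn : 0 < n) :
    ∃ k, P ^ k ≤ powSubOneKer P n := by
  rcases eq_or_ne P ⊥ with rfl | hP0
  · exact ⟨1, by simp⟩
  have hPfg : P.FG := IsNoetherian.noetherian P
  have hK0 : powSubOneKer P n ≠ ⊥ := by
    obtain ⟨t, ht, hne⟩ := Ideal.exists_one_add_pow_ne_one hP0 hP.ne_top hn
    have hunit : IsUnit (Ideal.Quotient.mk P (1 + t)) := by
      simp [Ideal.Quotient.eq_zero_iff_mem.mpr ht]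
    intro hbot
    have : (1 + t) ^ n - 1 ∈ powSubOneKer P n := pow_sub_one_mem_powSubOneKer hPfg hunit
    rw [hbot, Ideal.mem_bot, sub_eq_zero] at this
    exact hne this
  have hrad : P ≤ (powSubOneKer P n).radical := by
    rw [Ideal.radical_eq_sInf]
    refine le_sInf ?_
    rintro Q ⟨hKQ, hQ⟩
    have hQmax := hQ.isMaximal (ne_bot_of_le_ne_bot hK0 hKQ)
    by_contra hPQ
    exact sup_ne_top_of_powSubOneKer_le hPfg hn hQmax.ne_top hKQ
      (hP.coprime_of_ne hQmax fun h => hPQ h.le)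
  exact Ideal.exists_pow_le_of_le_radical_of_fg_radical hrad (IsNoetherian.noetherian _)

end AdicCompletion

section Dedekind

variable [IsDedekindDomain A]

theorem MaximalSpectrum.finite_setOf_mem {a : A} (ha : a ≠ 0) :
    {𝔭 : MaximalSpectrum A | a ∈ 𝔭.asIdeal}.Finite := by
  classical
  have hspan : Ideal.span {a} ≠ ⊥ := by simpa using ha
  refine ((normalizedFactors (Ideal.span {a})).toFinset.finite_toSet.preimage
    fun _ _ _ _ h => MaximalSpectrum.ext h).subset fun 𝔭 h𝔭 => ?_
  rw [Set.mem_preimage, Finset.mem_coe, Multiset.mem_toFinset,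
    Ideal.mem_normalizedFactors_iff hspan, Ideal.span_singleton_le_iff_mem]
  exact ⟨𝔭.isMaximal.isPrime, h𝔭⟩

theorem Ideal.le_of_forall_le_pow {I J : Ideal A}
    (h : ∀ (𝔭 : MaximalSpectrum A) (e : ℕ), I ≤ 𝔭.asIdeal ^ e → J ≤ 𝔭.asIdeal ^ e) : J ≤ I := by
  rcases eq_or_ne I ⊥ with rfl | hI
  · obtain ⟨𝔭, h𝔭⟩ := Ideal.exists_maximal A
    rw [← Ideal.iInf_pow_eq_bot_of_isDomain 𝔭 h𝔭.ne_top]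
    exact le_iInf fun e => h ⟨𝔭, h𝔭⟩ e bot_le
  · rw [← Ideal.iInf_maxPowDividing_eq hI]
    refine le_iInf fun v => h ⟨v.asIdeal, v.isMaximal⟩ _ ?_
    exact (Ideal.iInf_maxPowDividing_eq hI).ge.trans (iInf_le _ v)

open AdicCompletion

variable {n : ℕ}

theorem isCongruing_iInf_powSubOneKer (hn : 0 < n) :
    (⨅ 𝔭 : MaximalSpectrum A, powSubOneKer 𝔭.asIdeal n).IsCongruing n := by
  intro a
  rcases eq_or_ne a 0 with rfl | ha
  · exact ⟨1, by simp⟩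
  have hlocal : ∀ 𝔭 ∈ {𝔭 : MaximalSpectrum A | a ∈ 𝔭.asIdeal},
      ∀ᶠ N in atTop, a ^ N ∈ powSubOneKer 𝔭.asIdeal n := by
    intro 𝔭 ha𝔭
    obtain ⟨k, hk⟩ := exists_pow_le_powSubOneKer 𝔭.isMaximal hn
    filter_upwards [eventually_ge_atTop k] with N hN
    exact hk (Ideal.pow_le_pow_right hN (Ideal.pow_mem_pow ha𝔭 N))
  obtain ⟨N, hN⟩ :=
    ((eventually_all_finite (MaximalSpectrum.finite_setOf_mem ha)).mpr hlocal).exists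
  refine ⟨N, Submodule.mem_iInf _ |>.mpr fun 𝔭 => ?_⟩
  by_cases ha𝔭 : a ∈ 𝔭.asIdeal
  · exact Ideal.mul_mem_right _ _ (hN 𝔭 ha𝔭)
  · let := Ideal.Quotient.field 𝔭.asIdeal
    refine Ideal.mul_mem_left _ _ (pow_sub_one_mem_powSubOneKer (IsNoetherian.noetherian _) ?_)
    exact isUnit_iff_ne_zero.mpr (Ideal.Quotient.eq_zero_iff_mem.not.mpr ha𝔭)

theorem iInf_powSubOneKer_le {I : Ideal A} (hI : I.IsCongruing n) :
    ⨅ 𝔭 : MaximalSpectrum A, powSubOneKer 𝔭.asIdeal n ≤ I :=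
  Ideal.le_of_forall_le_pow fun 𝔭 _ hle =>
    (iInf_le _ 𝔭).trans (powSubOneKer_le_pow (hI.mono hle))

end Dedekind

theorem stmt_10_general {A : Type} [CommRing A] [IsDedekindDomain A]
    (n : ℕ) (hn : 0 < n)
    (J : Ideal A)
    (hJ : J = ⨅ 𝔭 : MaximalSpectrum A,
        Ideal.comap (algebraMap A (AdicCompletion 𝔭.asIdeal A))
          (Ideal.span {y : AdicCompletion 𝔭.asIdeal A |
            ∃ x : (AdicCompletion 𝔭.asIdeal A)ˣ,
              y = (x : AdicCompletion 𝔭.asIdeal A) ^ n - 1})) :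
    (∀ a : A, ∃ N : ℕ, a ^ N * (a ^ n - 1) ∈ J) ∧
      ∀ I : Ideal A, (∀ a : A, ∃ N : ℕ, a ^ N * (a ^ n - 1) ∈ I) → J ≤ I := by
  subst hJ
  exact ⟨isCongruing_iInf_powSubOneKer hn, fun I hI => iInf_powSubOneKer_le hI⟩

/-- Let `A` be a Minkowski Dedekind domain and `n` a positive integer. Then the kernel of
`pr_n : A → ∏_𝔭 Â_𝔭/H_n^𝔭` — namely the ideal `⨅_𝔭 (H_n^𝔭 comap the completion map)` —
is the unique minimal `n`-congruing ideal of `A`: it is itself `n`-congruing and is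
contained in every `n`-congruing ideal. -/
theorem stmt_10 {A : Type} [CommRing A] [IsDomain A] [IsDedekindDomain A]
    (hfin : ∀ 𝔭 : MaximalSpectrum A, Finite (A ⧸ 𝔭.asIdeal))
    (hmink : ∀ N : ℕ, {𝔭 : MaximalSpectrum A | Nat.card (A ⧸ 𝔭.asIdeal) < N}.Finite)
    (n : ℕ) (hn : 0 < n)
    (J : Ideal A)
    (hJ : J = ⨅ 𝔭 : MaximalSpectrum A,
        Ideal.comap (algebraMap A (AdicCompletion 𝔭.asIdeal A))
          (Ideal.span {y : AdicCompletion 𝔭.asIdeal A |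
            ∃ x : (AdicCompletion 𝔭.asIdeal A)ˣ,
              y = (x : AdicCompletion 𝔭.asIdeal A) ^ n - 1})) :
    (∀ a : A, ∃ N : ℕ, a ^ N * (a ^ n - 1) ∈ J) ∧
      ∀ I : Ideal A, (∀ a : A, ∃ N : ℕ, a ^ N * (a ^ n - 1) ∈ I) → J ≤ I :=
  stmt_10_general n hn J hJ
end

section
/- Let A be a Minkowski Dedekind domain and n a positive integer. An ideal I of A is n-congruing if and only if for every maximal ideal 𝔭 of A, the extension of I to the completion Â_𝔭 is an n-congruing ideal of Â_𝔭 (Hasse principle for n-congruing ideals). -/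
/-!
Write `I = 𝔭 ^ e * J` with `J` prime to `𝔭`. Elements of `1 + 𝔭 Â_𝔭` are units, so `J` becomes
the unit ideal in `Â_𝔭` and `I Â_𝔭 = 𝔭 ^ e Â_𝔭`. Modulo this ideal every element of `Â_𝔭` is
congruent to an element of `A`, which gives the forward direction; conversely `𝔭 ^ e Â_𝔭`
contracts to `𝔭 ^ e`, and `I` is the intersection of the finitely many `𝔭 ^ e` with `e > 0`.
The exponents `N` for these finitely many primes can be merged because `a ^ N * (a ^ n - 1) ∈ I`
persists as `N` grows. For `I = 0`, the congruing condition forces `A` to be a field, and `0`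
contracts to `0` by Krull's intersection theorem.
-/

namespace Ideal

variable {R S : Type*} [CommRing R] [CommRing S]

def IsCongruing_s11 (I : Ideal R) (n : ℕ) : Prop :=
  ∀ a : R, ∃ N : ℕ, a ^ N * (a ^ n - 1) ∈ I

variable {I J : Ideal R} {n : ℕ}

open Filter in
theorem isCongruing_iff_eventually :
    I.IsCongruing_s11 n ↔ ∀ a : R, ∀ᶠ N in atTop, a ^ N * (a ^ n - 1) ∈ I := by
  refine ⟨fun h a => ?_, fun h a => (h a).exists⟩
  obtain ⟨N₀, hN₀⟩ := h a
  filter_upwards [eventually_ge_atTop N₀] with N hN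
  rw [← Nat.sub_add_cancel hN, pow_add, mul_assoc]
  exact I.mul_mem_left _ hN₀

theorem isCongruing_top : (⊤ : Ideal R).IsCongruing_s11 n := fun _ => ⟨0, Submodule.mem_top⟩

theorem IsCongruing_s11.inf (hI : I.IsCongruing_s11 n) (hJ : J.IsCongruing_s11 n) :
    (I ⊓ J).IsCongruing_s11 n := by
  rw [isCongruing_iff_eventually] at *
  exact fun a => (hI a).and (hJ a)

theorem IsCongruing_s11.finset_inf {ι : Type*} {s : Finset ι} {J : ι → Ideal R}
    (h : ∀ i ∈ s, (J i).IsCongruing_s11 n) : (s.inf J).IsCongruing_s11 n :=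
  Finset.inf_induction (p := fun K : Ideal R => K.IsCongruing_s11 n) isCongruing_top
    (fun _ hI _ hJ => hI.inf hJ) h

theorem IsCongruing_s11.comap (f : R →+* S) {J : Ideal S} (h : J.IsCongruing_s11 n) :
    (J.comap f).IsCongruing_s11 n := fun a => by
  simpa [mem_comap] using h (f a)

theorem IsCongruing_s11.of_map_le (f : R →+* S) {J : Ideal S} (h : I.IsCongruing_s11 n)
    (hIJ : I.map f ≤ J) (hf : ∀ b, ∃ a, b - f a ∈ J) : J.IsCongruing_s11 n := fun b => by
  obtain ⟨a, hab⟩ := hf b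
  obtain ⟨N, hN⟩ := h a
  refine ⟨N, ?_⟩
  have hb : Quotient.mk J b = Quotient.mk J (f a) := Quotient.eq.mpr hab
  have hcongr :
      Quotient.mk J (b ^ N * (b ^ n - 1)) = Quotient.mk J (f (a ^ N * (a ^ n - 1))) := by
    simp [hb]
  rw [← Quotient.eq_zero_iff_mem, hcongr, Quotient.eq_zero_iff_mem]
  exact hIJ (mem_map_of_mem f hN)

theorem IsCongruing_s11.eq_bot_of_ne_top [IsDomain R] (h : (⊥ : Ideal R).IsCongruing_s11 n) (hn : 0 < n)
    (hJ : J ≠ ⊤) : J = ⊥ := by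
  refine (Submodule.eq_bot_iff J).mpr fun a ha => ?_
  obtain ⟨N, hN⟩ := h a
  rcases mul_eq_zero.mp ((Submodule.mem_bot R).mp hN) with h0 | h1
  · exact pow_eq_zero_iff'.mp h0 |>.1
  · exact absurd (eq_top_of_isUnit_mem J ha (IsUnit.of_pow_eq_one (sub_eq_zero.mp h1) hn.ne')) hJ

end Ideal

namespace AdicCompletion

variable {R : Type*} [CommRing R] {𝔭 : Ideal R}

theorem ker_evalₐ_eq_map (h𝔭 : 𝔭.FG) (k : ℕ) :
    RingHom.ker (evalₐ 𝔭 k) = (𝔭 ^ k).map (algebraMap R (AdicCompletion 𝔭 R)) := by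
  ext x
  rw [← Submodule.restrictScalars_mem R (Ideal.map _ (𝔭 ^ k)), ← Ideal.smul_top_eq_map,
    pow_smul_top_eq_ker_eval h𝔭]
  simp only [RingHom.mem_ker, LinearMap.mem_ker, evalₐ, AlgHom.coe_comp, Function.comp_apply,
    AlgEquiv.coe_toAlgHom, EmbeddingLike.map_eq_zero_iff]
  rfl

theorem comap_map_pow (h𝔭 : 𝔭.FG) (k : ℕ) :
    ((𝔭 ^ k).map (algebraMap R (AdicCompletion 𝔭 R))).comap (algebraMap R _) = 𝔭 ^ k := by
  ext x
  rw [← ker_evalₐ_eq_map h𝔭]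
  simp [algebraMap_apply, Ideal.Quotient.eq_zero_iff_mem]

theorem exists_sub_algebraMap_mem_map_pow (h𝔭 : 𝔭.FG) (b : AdicCompletion 𝔭 R) (k : ℕ) :
    ∃ a : R, b - algebraMap R _ a ∈ (𝔭 ^ k).map (algebraMap R (AdicCompletion 𝔭 R)) := by
  obtain ⟨a, ha⟩ := Ideal.Quotient.mk_surjective (evalₐ 𝔭 k b)
  refine ⟨a, ?_⟩
  rw [← ker_evalₐ_eq_map h𝔭, RingHom.mem_ker, map_sub, ← ha]
  simp [algebraMap_apply]

theorem map_eq_top_of_sup_eq_top (h𝔭 : 𝔭.FG) {J : Ideal R} (h : 𝔭 ⊔ J = ⊤) :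
    J.map (algebraMap R (AdicCompletion 𝔭 R)) = ⊤ := by
  obtain ⟨m, hm, j, hj, hmj⟩ := Submodule.mem_sup.mp (h ▸ Submodule.mem_top : (1 : R) ∈ 𝔭 ⊔ J)
  have := isAdicComplete_self 𝔭 h𝔭
  have hjac : algebraMap R (AdicCompletion 𝔭 R) m ∈ (⊥ : Ideal _).jacobson :=
    IsAdicComplete.le_jacobson_bot _ (Ideal.mem_map_of_mem _ hm)
  refine Ideal.eq_top_of_isUnit_mem _ (Ideal.mem_map_of_mem _ hj)
    (Ideal.isUnit_of_sub_one_mem_jacobson_bot _ ?_)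
  rw [show algebraMap R (AdicCompletion 𝔭 R) j - 1 = -algebraMap R _ m by
    rw [← map_one (algebraMap R (AdicCompletion 𝔭 R)), ← hmj, map_add]; ring]
  exact neg_mem hjac

end AdicCompletion

namespace Ideal

open UniqueFactorizationMonoid

variable {A : Type*} [CommRing A] [IsDedekindDomain A] {I : Ideal A} {n : ℕ}

theorem finset_inf_pow_count_normalizedFactors [DecidableEq (Ideal A)] (hI : I ≠ ⊥) :
    (normalizedFactors I).toFinset.inf (fun P => P ^ (normalizedFactors I).count P) = I := by
  rw [IsDedekindDomain.inf_pow_eq_prod_of_prime _ _ _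
      (fun P hP => prime_of_normalized_factor P (Multiset.mem_toFinset.mp hP))
      (fun _ _ _ _ h => h),
    ← Finset.prod_multiset_count]
  exact associated_iff_eq.mp (prod_normalizedFactors hI)

theorem map_adicCompletion_eq_map_pow_count (hI : I ≠ ⊥) (𝔭 : Ideal A) [𝔭.IsMaximal] :
    I.map (algebraMap A (AdicCompletion 𝔭 A))
      = (𝔭 ^ (normalizedFactors I).count 𝔭).map (algebraMap A (AdicCompletion 𝔭 A)) := by
  obtain ⟨J, hJ, hIJ⟩ := eq_prime_pow_mul_coprime hI 𝔭
  conv_lhs => rw [hIJ]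
  rw [Ideal.map_mul, AdicCompletion.map_eq_top_of_sup_eq_top (IsNoetherian.noetherian 𝔭) hJ,
    Ideal.mul_top]

theorem IsCongruing_s11.map_adicCompletion (h : I.IsCongruing_s11 n) (hn : 0 < n)
    (𝔭 : Ideal A) [𝔭.IsMaximal] :
    (I.map (algebraMap A (AdicCompletion 𝔭 A))).IsCongruing_s11 n := by
  obtain ⟨e, he⟩ : ∃ e, (𝔭 ^ e).map (algebraMap A (AdicCompletion 𝔭 A))
      ≤ I.map (algebraMap A (AdicCompletion 𝔭 A)) := by
    by_cases hI : I = ⊥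
    · subst hI
      exact ⟨1, by rw [pow_one, h.eq_bot_of_ne_top hn ‹𝔭.IsMaximal›.ne_top]⟩
    · exact ⟨_, (map_adicCompletion_eq_map_pow_count hI 𝔭).ge⟩
  exact h.of_map_le _ le_rfl fun b =>
    (AdicCompletion.exists_sub_algebraMap_mem_map_pow (IsNoetherian.noetherian 𝔭) b e).imp
      fun _ ha => he ha

theorem isCongruing_of_forall_map_adicCompletion
    (h : ∀ 𝔭 : MaximalSpectrum A,
      (I.map (algebraMap A (AdicCompletion 𝔭.asIdeal A))).IsCongruing_s11 n) :
    I.IsCongruing_s11 n := by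
  classical
  by_cases hI : I = ⊥
  · subst hI
    obtain ⟨𝔭, h𝔭⟩ := exists_maximal A
    have hinj : Function.Injective (algebraMap A (AdicCompletion 𝔭 A)) := by
      have := IsHausdorff.of_isDomain 𝔭 h𝔭.ne_top
      exact AdicCompletion.of_injective 𝔭 A
    have := (h ⟨𝔭, h𝔭⟩).comap (algebraMap A _)
    rwa [map_bot, comap_bot_of_injective _ hinj] at this
  · rw [← finset_inf_pow_count_normalizedFactors hI]
    refine IsCongruing_s11.finset_inf fun P hP => ?_
    have hP : Prime P := prime_of_normalized_factor P (Multiset.mem_toFinset.mp hP)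
    have hPmax : P.IsMaximal := (isPrime_of_prime hP).isMaximal hP.ne_zero
    have := (h ⟨P, hPmax⟩).comap (algebraMap A _)
    rwa [map_adicCompletion_eq_map_pow_count hI,
      AdicCompletion.comap_map_pow (IsNoetherian.noetherian P)] at this

end Ideal

theorem stmt_11_general {A : Type} [CommRing A] [IsDedekindDomain A]
    (n : ℕ) (hn : 0 < n) (I : Ideal A) :
    (∀ a : A, ∃ N : ℕ, a ^ N * (a ^ n - 1) ∈ I) ↔
      ∀ 𝔭 : MaximalSpectrum A, ∀ b : AdicCompletion 𝔭.asIdeal A, ∃ N : ℕ,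
        b ^ N * (b ^ n - 1) ∈ Ideal.map (algebraMap A (AdicCompletion 𝔭.asIdeal A)) I :=
  ⟨fun h 𝔭 => Ideal.IsCongruing_s11.map_adicCompletion h hn 𝔭.asIdeal,
    Ideal.isCongruing_of_forall_map_adicCompletion⟩

/-- Hasse principle for `n`-congruing ideals: for a Minkowski Dedekind domain `A` and a
positive integer `n`, an ideal `I` of `A` is `n`-congruing if and only if, for every
maximal ideal `𝔭`, the extension of `I` to the `𝔭`-adic completion `Â_𝔭` is an
`n`-congruing ideal of `Â_𝔭`. -/
theorem stmt_11 {A : Type} [CommRing A] [IsDomain A] [IsDedekindDomain A]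
    (hfin : ∀ 𝔭 : MaximalSpectrum A, Finite (A ⧸ 𝔭.asIdeal))
    (hmink : ∀ N : ℕ, {𝔭 : MaximalSpectrum A | Nat.card (A ⧸ 𝔭.asIdeal) < N}.Finite)
    (n : ℕ) (hn : 0 < n) (I : Ideal A) :
    (∀ a : A, ∃ N : ℕ, a ^ N * (a ^ n - 1) ∈ I) ↔
      ∀ 𝔭 : MaximalSpectrum A, ∀ b : AdicCompletion 𝔭.asIdeal A, ∃ N : ℕ,
        b ^ N * (b ^ n - 1) ∈ Ideal.map (algebraMap A (AdicCompletion 𝔭.asIdeal A)) I :=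
  stmt_11_general n hn I
end

section
/- Let A be the ring of integers in a finite extension K of ℚ_p, with uniformizer π, ramification degree e over ℚ_p, and residue field 𝔽_q with q = p^f. Let n be a positive integer and suppose n is divisible by q − 1. Let H_n be the ideal of A generated by all x^n − 1 with x ∈ A^×, and let I_m be the ideal generated by all a^m − 1 with a ∈ A congruent to 1 mod π. Then H_n = I_{n/(q−1)}. -/
open Polynomial

/-- Let `A` be the ring of integers of a finite extension of `ℚ_p` (here: a complete
discrete valuation ring with uniformizer `π` and finite residue field of cardinality
`q = p^f`), and let `n` be a positive integer divisible by `q − 1`. Then the ideal `H_n`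
generated by all `x^n − 1` with `x` a unit equals the ideal `I_{n/(q−1)}` generated by all
`a^{n/(q−1)} − 1` with `a ≡ 1 mod π`. -/
theorem stmt_12 {A : Type} [CommRing A] [IsDomain A] (π : A) (hπ0 : π ≠ 0)
    (hπu : ¬ IsUnit π) (hmax : ∀ a : A, a ∉ Ideal.span {π} → IsUnit a)
    [IsAdicComplete (Ideal.span {π}) A]
    (p q f n : ℕ) (hp : p.Prime) (hf : 0 < f) (hq : q = p ^ f)
    (hcard : Nat.card (A ⧸ Ideal.span {π}) = q)
    (hn : 0 < n) (hdvd : (q - 1) ∣ n) :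
    Ideal.span {y : A | ∃ x : Aˣ, y = (x : A) ^ n - 1}
      = Ideal.span {y : A | ∃ a : A, a - 1 ∈ Ideal.span {π} ∧ y = a ^ (n / (q - 1)) - 1} := by
  set I : Ideal A := Ideal.span {π} with hI
  have hq2 : 2 ≤ q := by
    subst hq
    exact Nat.one_lt_pow hf.ne' hp.one_lt
  have hItop : I ≠ ⊤ := fun h => hπu (Ideal.span_singleton_eq_top.mp (hI ▸ h))
  -- the quotient is a finite field of cardinality q
  have hfin : Finite (A ⧸ I) := Nat.finite_of_card_ne_zero (by omega)
  letI : Fintype (A ⧸ I) := Fintype.ofFinite _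
  have hcard' : Fintype.card (A ⧸ I) = q := by
    rw [← Nat.card_eq_fintype_card, hcard]
  have hImax : I.IsMaximal := by
    rw [Ideal.isMaximal_iff]
    constructor
    · intro h; exact hItop ((Ideal.eq_top_iff_one I).2 h)
    · intro J x hIJ hxI hxJ
      obtain ⟨u, hu⟩ := hmax x hxI
      have : (u⁻¹ : Aˣ) * x ∈ J := J.mul_mem_left _ hxJ
      rwa [← hu, Units.inv_mul] at this
  letI : Field (A ⧸ I) := Ideal.Quotient.field I
  have hqzero : ((q : ℕ) : A ⧸ I) = 0 := by
    rw [← hcard']; exact FiniteField.cast_card_eq_zero _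
  set m := n / (q - 1) with hm
  have hnm : n = (q - 1) * m := (Nat.mul_div_cancel' hdvd).symm
  -- key fact: units to the (q-1) power are ≡ 1 mod π
  have key1 : ∀ x : Aˣ, (x : A) ^ (q - 1) - 1 ∈ I := by
    intro x
    rw [← Ideal.Quotient.eq_zero_iff_mem]
    have hx0 : (Ideal.Quotient.mk I (x : A)) ≠ 0 := by
      intro h
      have := (Ideal.Quotient.mk I).isUnit_map x.isUnit
      rw [h] at this
      exact this.ne_zero rfl
    have := FiniteField.pow_card_sub_one_eq_one (Ideal.Quotient.mk I (x : A)) hx0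
    rw [hcard'] at this
    rw [map_sub, map_pow, map_one, this, sub_self]
  apply le_antisymm
  · rw [Ideal.span_le]
    rintro y ⟨x, rfl⟩
    apply Ideal.subset_span
    refine ⟨(x : A) ^ (q - 1), key1 x, ?_⟩
    rw [← pow_mul, ← hnm]
  · rw [Ideal.span_le]
    rintro y ⟨a, ha, rfl⟩
    -- use Hensel's lemma to extract a (q-1)-st root of a
    have hq1 : q - 1 ≠ 0 := by omega
    have h1 : ((X : A[X]) ^ (q - 1) - C a).eval 1 ∈ I := by
      simpa using I.neg_mem ha
    have h2 : IsUnit (Ideal.Quotient.mk I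
        (((X : A[X]) ^ (q - 1) - C a).derivative.eval 1)) := by
      rw [derivative_sub, derivative_C, sub_zero, derivative_X_pow]
      have : ((C ((q - 1 : ℕ) : A) * X ^ (q - 1 - 1)).eval 1) = ((q - 1 : ℕ) : A) := by
        simp
      rw [this, map_natCast]
      have : (((q - 1 : ℕ) : ℕ) : A ⧸ I) = -1 := by
        have : ((q - 1 : ℕ) : A ⧸ I) = (q : A ⧸ I) - 1 := by
          push_cast [Nat.cast_sub (by omega : 1 ≤ q)]; ring
        rw [this, hqzero, zero_sub]
      rw [this]
      exact isUnit_one.neg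
    obtain ⟨x, hroot, hx1⟩ := HenselianRing.is_henselian (I := I)
      ((X : A[X]) ^ (q - 1) - C a) (monic_X_pow_sub_C a hq1) 1 h1 h2
    have hxa : x ^ (q - 1) = a := by
      have := hroot
      simp only [IsRoot, eval_sub, eval_pow, eval_X, eval_C, sub_eq_zero] at this
      exact this
    -- x is a unit
    have hau : IsUnit a := by
      apply hmax
      intro haI
      have : (1 : A) ∈ I := by
        have := I.sub_mem haI ha
        simpa using I.neg_mem this
      exact hItop ((Ideal.eq_top_iff_one I).2 this)
    have hxu : IsUnit x := by
      have : x * x ^ (q - 2) = a := by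
        rw [← hxa, ← pow_succ']
        congr 1
        omega
      exact isUnit_of_mul_isUnit_left (this ▸ hau)
    obtain ⟨u, hu⟩ := hxu
    apply Ideal.subset_span
    refine ⟨u, ?_⟩
    rw [hu, ← hxa, ← pow_mul, ← hnm]
end

section
/- Let K/ℚ_p be a finite extension with ring of integers A, ramification degree e, residue degree f, and uniformizer π. Let n be a positive integer, write n = q·e + r with 0 ≤ r < e. Then there is an isomorphism of abelian groups A/π^n ≅ (ℤ/p^{q+1})^{⊕ f·r} ⊕ (ℤ/p^{q})^{⊕ f·(e−r)}. -/
/-!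
Lift an `𝔽_p`-basis `x₁, …, x_f` of `A/π` to `A`. Since `p = π^e u` with `u` a unit, the elements
`x_j π^i` with `i < e` generate `A/π^n` as an abelian group, and `x_j π^i` is killed by `p^(q+1)`
if `i < r` and by `p^q` if `i ≥ r`. This gives a surjection
`(ℤ/p^(q+1))^(fr) × (ℤ/p^q)^(f(e-r)) → A/π^n`. Both sides have `p^(fn)` elements (multiplication
by `π^m` identifies `A/π` with `π^m A/π^(m+1) A`), so the surjection is an isomorphism.
-/

theorem exists_fin_closure_range_eq_top {p f : ℕ} [Fact p.Prime] {G : Type*} [AddCommGroup G]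
    [Module (ZMod p) G] (hcard : Nat.card G = p ^ f) :
    ∃ b : Fin f → G, AddSubgroup.closure (Set.range b) = ⊤ := by
  have : Finite G := Nat.finite_of_card_ne_zero (by simp [hcard, NeZero.ne p])
  have hrank : Module.finrank (ZMod p) G = f := by
    have h := Module.natCard_eq_pow_finrank (K := ZMod p) (V := G)
    rw [hcard, Nat.card_zmod] at h
    exact (Nat.pow_right_injective (Fact.out : p.Prime).two_le h).symm
  let b := Module.finBasisOfFinrankEq (ZMod p) G hrank
  refine ⟨b, eq_top_iff.mpr fun g _ => ?_⟩
  have : Submodule.span (ZMod p) (Set.range b) ≤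
      AddSubgroup.toZModSubmodule p (AddSubgroup.closure (Set.range b)) :=
    Submodule.span_le.mpr AddSubgroup.subset_closure
  exact this (b.span_eq.ge Submodule.mem_top)

theorem exists_addMonoidHom_pi_zmod {G : Type*} [AddCommGroup G] {ι : Type*} [Fintype ι]
    [DecidableEq ι] {m : ℕ} (v : ι → G) (hv : ∀ i, m • v i = 0) :
    ∃ φ : (ι → ZMod m) →+ G, ∀ i, φ (Pi.single i 1) = v i := by
  have hv' : ∀ i, zmultiplesHom G (v i) m = 0 := fun i => by
    rw [zmultiplesHom_apply, natCast_zsmul, hv i]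
  refine ⟨∑ i, (ZMod.lift m ⟨zmultiplesHom G (v i), hv' i⟩).comp
    (Pi.evalAddMonoidHom _ i), fun i => ?_⟩
  rw [AddMonoidHom.finsetSum_apply, Finset.sum_eq_single i]
  · rw [AddMonoidHom.comp_apply, Pi.evalAddMonoidHom_apply, Pi.single_eq_same, ← Int.cast_one,
      ZMod.lift_coe]
    simp
  · intro j _ hj
    simp [Pi.single_eq_of_ne hj]
  · simp

section

open Ideal

variable {A : Type*} [CommRing A]

theorem natCard_quotient_span_pow [IsDomain A] {π : A} (hπ : π ≠ 0) (m : ℕ) :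
    Nat.card (A ⧸ span {π ^ m}) = Nat.card (A ⧸ span {π}) ^ m := by
  induction m with
  | zero =>
    rw [pow_zero, pow_zero, span_singleton_one]
    exact Nat.card_unique
  | succ m ih =>
    have hrange : (AddMonoidHom.mulLeft (π ^ m)).range = (span {π ^ m}).toAddSubgroup := by
      ext a
      simp [mem_span_singleton', mul_comm]
    have hcomap : (span {π ^ (m + 1)}).toAddSubgroup.comap (AddMonoidHom.mulLeft (π ^ m)) =
        (span {π}).toAddSubgroup := by
      ext a
      simp [mem_span_singleton, pow_succ, mul_dvd_mul_iff_left (pow_ne_zero m hπ)]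
    have hle : (span {π ^ (m + 1)}).toAddSubgroup ≤ (span {π ^ m}).toAddSubgroup :=
      span_singleton_le_span_singleton.mpr (pow_dvd_pow π m.le_succ)
    calc Nat.card (A ⧸ span {π ^ (m + 1)})
        = ((span {π ^ (m + 1)}).toAddSubgroup.comap (AddMonoidHom.mulLeft (π ^ m))).index *
            (span {π ^ m}).toAddSubgroup.index := by
          rw [AddSubgroup.index_comap, hrange, AddSubgroup.relIndex_mul_index hle]; rfl
      _ = Nat.card (A ⧸ span {π}) ^ (m + 1) := by
          rw [hcomap, pow_succ, mul_comm, ← ih]; rfl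

theorem closure_range_comp_mk_eq_top_iff (I : Ideal A) {ι : Type*} (x : ι → A) :
    AddSubgroup.closure (Set.range (Ideal.Quotient.mk I ∘ x)) = ⊤ ↔
      AddSubgroup.closure (Set.range x) ⊔ I.toAddSubgroup = ⊤ := by
  let g := (Ideal.Quotient.mk I).toAddMonoidHom
  have hker : g.ker = I.toAddSubgroup := by
    ext a; exact Ideal.Quotient.eq_zero_iff_mem
  rw [Set.range_comp, ← hker, ← AddSubgroup.comap_map_eq, AddMonoidHom.map_closure,
    ← (AddSubgroup.comap_injective (f := g) Ideal.Quotient.mk_surjective).eq_iff,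
    AddSubgroup.comap_top]
  exact Iff.rfl

theorem exists_closure_range_sup_span_eq_top {π : A} {p f : ℕ} (hp : p.Prime) (hπp : π ∣ (p : A))
    (hcard : Nat.card (A ⧸ span {π}) = p ^ f) :
    ∃ x : Fin f → A, AddSubgroup.closure (Set.range x) ⊔ (span {π}).toAddSubgroup = ⊤ := by
  have := Fact.mk hp
  have hp0 : ∀ z : A ⧸ span {π}, p • z = 0 := fun z => by
    rw [nsmul_eq_mul, ← map_natCast (Ideal.Quotient.mk _), Ideal.Quotient.eq_zero_iff_mem.mpr
      (mem_span_singleton.mpr hπp), zero_mul]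
  let _ := AddCommGroup.zmodModule hp0
  obtain ⟨b, hb⟩ := exists_fin_closure_range_eq_top hcard
  choose x hx using fun j => Ideal.Quotient.mk_surjective (b j)
  refine ⟨x, (closure_range_comp_mk_eq_top_iff _ x).mp ?_⟩
  rwa [show Ideal.Quotient.mk _ ∘ x = b from funext hx]

theorem sup_span_pow_eq_top {X M : AddSubgroup A} {π : A}
    (hX : X ⊔ (span {π}).toAddSubgroup = ⊤) {i : ℕ}
    (hM : ∀ l < i, ∀ s ∈ X, π ^ l * s ∈ M) :
    M ⊔ (span {π ^ i}).toAddSubgroup = ⊤ := by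
  induction i with
  | zero => simp [span_singleton_one]
  | succ i ih =>
    refine eq_top_iff.mpr fun a _ => ?_
    obtain ⟨t, ht, _, hb, rfl⟩ :=
      AddSubgroup.mem_sup.mp ((ih fun l hl => hM l (by omega)).ge (AddSubgroup.mem_top a))
    obtain ⟨b, rfl⟩ := mem_span_singleton'.mp hb
    obtain ⟨s, hs, _, hb', rfl⟩ := AddSubgroup.mem_sup.mp (hX.ge (AddSubgroup.mem_top b))
    obtain ⟨b', rfl⟩ := mem_span_singleton'.mp hb'
    rw [show t + (s + b' * π) * π ^ i = (t + π ^ i * s) + b' * π ^ (i + 1) by ring]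
    exact add_mem (AddSubgroup.mem_sup_left (add_mem ht (hM i i.lt_succ_self s hs)))
      (AddSubgroup.mem_sup_right (mem_span_singleton'.mpr ⟨b', rfl⟩))

theorem closure_monomials_sup_span_pow_eq_top {π c : A} {e p : ℕ} (he : 0 < e) (hc : IsUnit c)
    (hpc : (p : A) = π ^ e * c) {ι : Type*} {x : ι → A}
    (hx : AddSubgroup.closure (Set.range x) ⊔ (span {π}).toAddSubgroup = ⊤) (n : ℕ) :
    AddSubgroup.closure (Set.range fun ji : ι × Fin e => x ji.1 * π ^ (ji.2 : ℕ)) ⊔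
      (span {π ^ n}).toAddSubgroup = ⊤ := by
  -- The monomials generate `A` modulo `π^e A = p A`; as their span `N` is stable under
  -- multiplication by `p`, they then generate `A` modulo `p^n A ⊆ π^n A`.
  set N := AddSubgroup.closure (Set.range fun ji : ι × Fin e => x ji.1 * π ^ (ji.2 : ℕ))
  have hπe : N ⊔ (span {π ^ e}).toAddSubgroup = ⊤ := by
    refine sup_span_pow_eq_top hx fun l hl s hs => ?_
    have : AddSubgroup.closure (Set.range x) ≤ N.comap (AddMonoidHom.mulLeft (π ^ l)) := by
      rw [AddSubgroup.closure_le]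
      rintro _ ⟨j, rfl⟩
      exact AddSubgroup.subset_closure ⟨(j, ⟨l, hl⟩), mul_comm _ _⟩
    exact this hs
  have hp : N ⊔ (span {(p : A)}).toAddSubgroup = ⊤ := by
    rwa [hpc, span_singleton_mul_right_unit hc]
  have hpn : N ⊔ (span {(p : A) ^ n}).toAddSubgroup = ⊤ :=
    sup_span_pow_eq_top hp fun l _ s hs => by
      rw [← Nat.cast_pow, ← nsmul_eq_mul]
      exact N.nsmul_mem hs _
  refine eq_top_iff.mpr (hpn.ge.trans (sup_le_sup_left ?_ _))
  rw [hpc, mul_pow, ← pow_mul]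
  exact span_singleton_le_span_singleton.mpr
    (dvd_mul_of_dvd_left (pow_dvd_pow π (Nat.le_mul_of_pos_left n he)) _)

theorem exists_surjective_addMonoidHom_quotient_span_pow {π c : A} {p e f q r : ℕ}
    (hc : IsUnit c) (hpc : (p : A) = π ^ e * c) (hr : r < e) {x : Fin f → A}
    (hx : AddSubgroup.closure (Set.range x) ⊔ (span {π}).toAddSubgroup = ⊤) :
    ∃ φ : ((Fin (f * r) → ZMod (p ^ (q + 1))) × (Fin (f * (e - r)) → ZMod (p ^ q))) →+
      A ⧸ span {π ^ (q * e + r)}, Function.Surjective φ := by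
  set n := q * e + r
  have hkill : ∀ a i y, n ≤ a * e + i →
      (p ^ a) • Ideal.Quotient.mk (span {π ^ n}) (y * π ^ i) = 0 := by
    intro a i y hn
    obtain ⟨d, hd⟩ := Nat.exists_eq_add_of_le hn
    rw [nsmul_eq_mul, ← map_natCast (Ideal.Quotient.mk _), ← map_mul,
      Ideal.Quotient.eq_zero_iff_mem, mem_span_singleton, Nat.cast_pow, hpc]
    exact ⟨π ^ d * c ^ a * y, by
      calc (π ^ e * c) ^ a * (y * π ^ i) = π ^ (a * e + i) * (c ^ a * y) := by ring
        _ = π ^ n * (π ^ d * c ^ a * y) := by rw [hd]; ring⟩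
  let v₁ : Fin (f * r) → A ⧸ span {π ^ n} := fun k =>
    Ideal.Quotient.mk _ (x (finProdFinEquiv.symm k).1 * π ^ ((finProdFinEquiv.symm k).2 : ℕ))
  let v₂ : Fin (f * (e - r)) → A ⧸ span {π ^ n} := fun k =>
    Ideal.Quotient.mk _ (x (finProdFinEquiv.symm k).1 * π ^ (r + (finProdFinEquiv.symm k).2))
  obtain ⟨φ₁, hφ₁⟩ := exists_addMonoidHom_pi_zmod v₁ fun k =>
    hkill (q + 1) _ _ (by rw [Nat.succ_mul]; omega)
  obtain ⟨φ₂, hφ₂⟩ := exists_addMonoidHom_pi_zmod v₂ fun k => hkill q _ _ (by omega)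
  refine ⟨φ₁.coprod φ₂, ?_⟩
  rw [← AddMonoidHom.range_eq_top, eq_top_iff, ← (closure_range_comp_mk_eq_top_iff _ _).mpr
    (closure_monomials_sup_span_pow_eq_top (by omega) hc hpc hx n), AddSubgroup.closure_le]
  rintro _ ⟨⟨j, i⟩, rfl⟩
  rcases lt_or_ge (i : ℕ) r with hi | hi
  · exact ⟨(Pi.single (finProdFinEquiv (j, ⟨i, hi⟩)) 1, 0), by
      simp only [AddMonoidHom.coprod_apply, hφ₁, map_zero, add_zero, v₁, Equiv.symm_apply_apply,
        Function.comp_apply]⟩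
  · exact ⟨(0, Pi.single (finProdFinEquiv (j, ⟨i - r, by omega⟩)) 1), by
      simp only [AddMonoidHom.coprod_apply, hφ₂, map_zero, zero_add, v₂, Equiv.symm_apply_apply,
        Function.comp_apply, Nat.add_sub_cancel' hi]⟩

end

theorem stmt_14_general {A : Type} [CommRing A] [IsDomain A] (π : A) (hπ0 : π ≠ 0)
    (hmax : ∀ a : A, a ∉ Ideal.span {π} → IsUnit a)
    (p e f : ℕ) (hp : p.Prime)
    (he : π ^ e ∣ (p : A) ∧ ¬ π ^ (e + 1) ∣ (p : A))
    (hcard : Nat.card (A ⧸ Ideal.span {π}) = p ^ f)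
    (n q r : ℕ) (hnqr : n = q * e + r) (hr : r < e) :
    Nonempty ((A ⧸ Ideal.span {π ^ n}) ≃+
      ((Fin (f * r) → ZMod (p ^ (q + 1))) × (Fin (f * (e - r)) → ZMod (p ^ q)))) := by
  subst hnqr
  obtain ⟨c, hpc⟩ := he.1
  have hc : IsUnit c := by
    by_contra hc
    obtain ⟨d, rfl⟩ := Ideal.mem_span_singleton.mp (not_imp_comm.mp (hmax c) hc)
    exact he.2 ⟨d, by rw [hpc]; ring⟩
  obtain ⟨x, hx⟩ := exists_closure_range_sup_span_eq_top hp
    (hpc ▸ dvd_mul_of_dvd_left (dvd_pow_self π (by omega)) c) hcard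
  obtain ⟨φ, hφ⟩ := exists_surjective_addMonoidHom_quotient_span_pow (q := q) hc hpc hr hx
  have hcard_eq : Nat.card ((Fin (f * r) → ZMod (p ^ (q + 1))) ×
      (Fin (f * (e - r)) → ZMod (p ^ q))) = Nat.card (A ⧸ Ideal.span {π ^ (q * e + r)}) := by
    obtain ⟨d, rfl⟩ := Nat.exists_eq_add_of_le hr.le
    simp only [Nat.card_prod, Nat.card_fun, Nat.card_zmod, Nat.card_fin,
      natCard_quotient_span_pow hπ0, hcard, ← pow_mul, Nat.add_sub_cancel_left]
    rw [← pow_add]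
    ring_nf
  have : NeZero p := ⟨hp.ne_zero⟩
  exact ⟨(AddEquiv.ofBijective φ
    ((Nat.bijective_iff_surjective_and_card φ).mpr ⟨hφ, hcard_eq⟩)).symm⟩

/-- Let `A` be the ring of integers of a finite extension `K/ℚ_p` (here: a complete
discrete valuation ring with uniformizer `π`) with ramification degree `e` (so `π^e ∥ p`)
and residue degree `f` (so `|A/π| = p^f`). Let `n` be a positive integer, written as
`n = q·e + r` with `0 ≤ r < e`. Then, as abelian groups,
`A/π^n ≅ (ℤ/p^{q+1})^{⊕ f·r} ⊕ (ℤ/p^q)^{⊕ f·(e−r)}`. -/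
theorem stmt_14 {A : Type} [CommRing A] [IsDomain A] (π : A) (hπ0 : π ≠ 0)
    (hπu : ¬ IsUnit π) (hmax : ∀ a : A, a ∉ Ideal.span {π} → IsUnit a)
    [IsAdicComplete (Ideal.span {π}) A]
    (p e f : ℕ) (hp : p.Prime) (hf0 : 0 < f)
    (he : π ^ e ∣ (p : A) ∧ ¬ π ^ (e + 1) ∣ (p : A))
    (hcard : Nat.card (A ⧸ Ideal.span {π}) = p ^ f)
    (n q r : ℕ) (hn : 0 < n) (hnqr : n = q * e + r) (hr : r < e) :
    Nonempty ((A ⧸ Ideal.span {π ^ n}) ≃+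
      ((Fin (f * r) → ZMod (p ^ (q + 1))) × (Fin (f * (e - r)) → ZMod (p ^ q)))) :=
  stmt_14_general π hπ0 hmax p e f hp he hcard n q r hnqr hr
end

section
/- For every prime p and positive integer n: the p-adic valuation of the denominator of ζ(1 − 2n) = −B_{2n}/(2n) equals 0 if (p − 1) does not divide 2n, and equals 1 + ν_p(2n) if (p − 1) divides 2n. (Here B_{2n} is the 2n-th Bernoulli number.) -/
/-!
Write `m = 2n` and `e = ν_p(m)`. If `(p - 1) ∣ m`, von Staudt–Clausen says that `B_m + 1/p` is
`p`-integral, so `|B_m|_p = p` and `|B_m / m|_p = p^(1 + e)`. If `(p - 1) ∤ m`, choose `c` prime to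
`p` with `c^m ≢ 1 (mod p)`; permuting `range p^K` by `k ↦ c k mod p^K` and expanding `(r + q p^K)^m`
modulo `p^(2K)` gives `p^(K + e) ∣ ∑_{k < p^K} k^m`. Faulhaber's formula writes `B_m` as
`p^(-K) ∑_{k < p^K} k^m` plus terms that the bound `|B_i|_p ≤ p` makes small for large `K`,
so `|B_m|_p ≤ |m|_p` and `B_m / m` is `p`-integral.
-/

open Finset

theorem padicNorm_natCast_eq_zpow {p n : ℕ} (hn : n ≠ 0) :
    padicNorm p n = (p : ℚ) ^ (-(padicValNat p n : ℤ)) := by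
  rw [padicNorm.eq_zpow_of_nonzero (by exact_mod_cast hn), padicValRat.of_nat]

section Padic

variable {p : ℕ} [hp : Fact p.Prime]

theorem padicNorm_inv_prime : padicNorm p (p : ℚ)⁻¹ = p := by
  rw [← one_div, padicNorm.div, padicNorm.one, padicNorm.padicNorm_p_of_prime, one_div, inv_inv]

theorem padicValNat_den_eq_toNat (q : ℚ) :
    padicValNat p q.den = (-padicValRat p q).toNat := by
  rw [padicValRat_def]
  by_cases hpd : p ∣ q.den
  · have hnum : padicValInt p q.num = 0 := by
      refine padicValNat.eq_zero_of_not_dvd fun hpn => hp.out.one_lt.ne' ?_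
      exact Nat.eq_one_of_dvd_one (q.reduced ▸ Nat.dvd_gcd hpn hpd)
    simp [hnum]
  · simp [padicValNat.eq_zero_of_not_dvd hpd]

theorem padicValNat_den_eq_zero_of_padicNorm_le_one {q : ℚ} (hq : padicNorm p q ≤ 1) :
    padicValNat p q.den = 0 := by
  rw [padicValNat_den_eq_toNat, Int.toNat_eq_zero, neg_nonpos]
  rcases eq_or_ne q 0 with rfl | hq0
  · simp
  rw [padicNorm.eq_zpow_of_nonzero hq0] at hq
  have := (zpow_le_one_iff_right₀ (by exact_mod_cast hp.out.one_lt : (1 : ℚ) < p)).mp hq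
  omega

theorem padicValNat_den_eq_of_padicNorm_eq_pow {q : ℚ} {j : ℕ}
    (hq : padicNorm p q = (p : ℚ) ^ j) :
    padicValNat p q.den = j := by
  have hq0 : q ≠ 0 := by
    rintro rfl
    rw [padicNorm.zero] at hq
    exact pow_ne_zero j (by exact_mod_cast hp.out.ne_zero) hq.symm
  rw [padicNorm.eq_zpow_of_nonzero hq0, ← zpow_natCast] at hq
  have := zpow_right_injective₀ (by exact_mod_cast hp.out.pos : (0 : ℚ) < p)
    (by exact_mod_cast hp.out.one_lt.ne' : (p : ℚ) ≠ 1) hq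
  rw [padicValNat_den_eq_toNat, this, Int.toNat_natCast]

end Padic

theorem Nat.Coprime.sum_range_mul_mod {M : Type*} [AddCommMonoid M] {c n : ℕ}
    (hc : c.Coprime n) (f : ℕ → M) :
    ∑ k ∈ range n, f (c * k % n) = ∑ k ∈ range n, f k := by
  rcases n.eq_zero_or_pos with rfl | hn
  · simp
  have hmaps : Set.MapsTo (fun k => c * k % n) (range n) (range n) :=
    fun k _ => mem_range.mpr (Nat.mod_lt _ hn)
  have hinj : Set.InjOn (fun k => c * k % n) (range n) := by
    intro a ha b hb hab
    have := Nat.ModEq.cancel_left_of_coprime (hc.symm.gcd_eq_one) hab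
    rwa [Nat.ModEq, Nat.mod_eq_of_lt (mem_range.mp ha), Nat.mod_eq_of_lt (mem_range.mp hb)]
      at this
  exact sum_nbij _ hmaps hinj (surjOn_of_injOn_of_card_le _ hmaps hinj le_rfl) fun _ _ => rfl

theorem mul_dvd_pow_sub_one_mul_sum_range_pow {c n m d : ℕ} (hc : c.Coprime n)
    (hdn : d ∣ n) (hdm : d ∣ m) :
    ((n * d : ℕ) : ℤ) ∣ ((c : ℤ) ^ m - 1) * ∑ k ∈ range n, (k : ℤ) ^ m := by
  set W : ℤ := ∑ k ∈ range n, ((c * k % n : ℕ) : ℤ) ^ (m - 1) * ((c * k / n : ℕ) : ℤ)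
  -- write `c * k = r + q * n` with `r = c * k % n`; then `k ↦ r` permutes `range n`
  have hsq : (n : ℤ) ^ 2 ∣ (c : ℤ) ^ m * ∑ k ∈ range n, (k : ℤ) ^ m
      - ∑ k ∈ range n, (k : ℤ) ^ m - m * n * W := by
    nth_rw 2 [← hc.sum_range_mul_mod (fun k => (k : ℤ) ^ m)]
    rw [mul_sum, mul_sum, ← sum_sub_distrib, ← sum_sub_distrib]
    refine dvd_sum fun k _ => ?_
    have hck : ((c : ℤ) * k) = ((c * k % n : ℕ) : ℤ) + ((c * k / n : ℕ) : ℤ) * n := by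
      exact_mod_cast (Nat.mod_add_div' (c * k) n).symm
    have := sq_dvd_add_pow_sub_sub (((c * k / n : ℕ) : ℤ) * n) ((c * k % n : ℕ) : ℤ) m
    rw [← mul_pow, hck]
    refine (Dvd.intro_left _ (mul_pow _ _ 2).symm).trans (this.trans (dvd_of_eq ?_))
    ring
  have hnd : ((n * d : ℕ) : ℤ) ∣ (n : ℤ) ^ 2 := by
    rw [sq]; exact_mod_cast Nat.mul_dvd_mul_left n hdn
  have hmn : ((n * d : ℕ) : ℤ) ∣ m * n * W := by
    obtain ⟨m', rfl⟩ := hdm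
    exact ⟨m' * W, by push_cast; ring⟩
  have := dvd_add (hnd.trans hsq) hmn
  rwa [sub_add_cancel, ← sub_one_mul] at this

theorem ZMod.exists_unit_pow_ne_one {p m : ℕ} [Fact p.Prime] (hm : ¬ (p - 1) ∣ m) :
    ∃ u : (ZMod p)ˣ, u ^ m ≠ 1 := by
  by_contra! h
  apply hm
  rw [← ZMod.card_units p, ← Nat.card_eq_fintype_card, ← IsCyclic.exponent_eq_card]
  exact Monoid.exponent_dvd_of_forall_pow_eq_one h

theorem pow_add_padicValNat_dvd_sum_range_pow {p m K : ℕ} [hp : Fact p.Prime]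
    (hm : ¬ (p - 1) ∣ m) (hK : padicValNat p m ≤ K) :
    (p : ℤ) ^ (K + padicValNat p m) ∣ ∑ k ∈ range (p ^ K), (k : ℤ) ^ m := by
  obtain ⟨u, hu⟩ := ZMod.exists_unit_pow_ne_one hm
  set c := (u : ZMod p).val
  have hcu : (c : ZMod p) = u := ZMod.natCast_zmod_val _
  have hc : c.Coprime (p ^ K) := by
    refine Nat.Coprime.pow_right _ ((Nat.coprime_comm.mp ?_))
    refine (hp.out.coprime_iff_not_dvd).mpr fun hpc => u.ne_zero ?_
    rw [← hcu, ZMod.natCast_eq_zero_iff]; exact hpc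
  have hcm : IsCoprime ((p : ℤ) ^ (K + padicValNat p m)) ((c : ℤ) ^ m - 1) := by
    refine IsCoprime.pow_left ((Nat.prime_iff_prime_int.mp hp.out).coprime_iff_not_dvd.mpr ?_)
    rw [← ZMod.intCast_zmod_eq_zero_iff_dvd]
    push_cast
    rw [hcu, sub_eq_zero]
    exact fun h => hu (Units.ext (by simpa using h))
  have := mul_dvd_pow_sub_one_mul_sum_range_pow hc (pow_dvd_pow p hK) pow_padicValNat_dvd
  push_cast [← pow_add] at this
  exact hcm.dvd_of_dvd_mul_left this

theorem bernoulli_eq_sum_range_pow_div_sub (m : ℕ) {N : ℕ} (hN : N ≠ 0) :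
    bernoulli m = (∑ k ∈ range N, (k : ℚ) ^ m) / N -
      ∑ i ∈ range m, bernoulli i * ((m + 1).choose i) * (N : ℚ) ^ (m - i) / (m + 1) := by
  have hN' : (N : ℚ) ≠ 0 := by exact_mod_cast hN
  rw [eq_sub_iff_add_eq', sum_range_pow, sum_range_succ, add_div, sum_div]
  congr 1
  · refine sum_congr rfl fun i hi => ?_
    rw [show m + 1 - i = m - i + 1 by have := mem_range.mp hi; omega, pow_succ]
    field_simp
  · rw [Nat.choose_succ_self_right, Nat.add_sub_cancel_left, pow_one]
    push_cast
    field_simp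

section Bernoulli

variable {p : ℕ} [hp : Fact p.Prime]

theorem padicNorm_bernoulli_two_mul_add_inv_le_one {k : ℕ} (hk : 0 < k) :
    padicNorm p (bernoulli (2 * k) + if (p - 1) ∣ 2 * k then (p : ℚ)⁻¹ else 0) ≤ 1 := by
  obtain ⟨z, hz⟩ := Bernoulli.vonStaudt_clausen k
  set F := (range (2 * k + 2)).filter fun q => q.Prime ∧ (q - 1) ∣ 2 * k
  have hpF : p ∈ F ↔ (p - 1) ∣ 2 * k := by
    refine ⟨fun h => (mem_filter.mp h).2.2, fun h => mem_filter.mpr ⟨?_, hp.out, h⟩⟩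
    have := Nat.le_of_dvd (by omega) h
    exact mem_range.mpr (by omega)
  have hsplit : ∑ q ∈ F, (1 : ℚ) / q =
      (if (p - 1) ∣ 2 * k then (p : ℚ)⁻¹ else 0) + ∑ q ∈ F with q ≠ p, (1 : ℚ) / q := by
    rw [← sum_filter_add_sum_filter_not F (· = p), filter_eq']
    by_cases h : (p - 1) ∣ 2 * k <;> simp [h, hpF]
  have hrest : padicNorm p (∑ q ∈ F with q ≠ p, (1 : ℚ) / q) ≤ 1 := by
    refine padicNorm.sum_le' (fun q hq => ?_) zero_le_one
    obtain ⟨hqF, hqp⟩ := mem_filter.mp hq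
    have : Fact q.Prime := ⟨(mem_filter.mp hqF).2.1⟩
    rw [padicNorm.div, padicNorm.one, padicNorm.padicNorm_of_prime_of_ne (Ne.symm hqp), div_one]
  have hB : bernoulli (2 * k) + (if (p - 1) ∣ 2 * k then (p : ℚ)⁻¹ else 0) =
      z - ∑ q ∈ F with q ≠ p, (1 : ℚ) / q := by
    rw [hz, hsplit]; ring
  rw [hB]
  exact padicNorm.sub.trans (max_le (padicNorm.of_int z) hrest)

theorem padicNorm_bernoulli_two_mul_of_sub_one_dvd {k : ℕ} (hk : 0 < k)
    (h : (p - 1) ∣ 2 * k) : padicNorm p (bernoulli (2 * k)) = p := by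
  have hint := padicNorm_bernoulli_two_mul_add_inv_le_one (p := p) hk
  rw [if_pos h] at hint
  have hlt : padicNorm p (bernoulli (2 * k) + (p : ℚ)⁻¹) < padicNorm p (-(p : ℚ)⁻¹) := by
    rw [padicNorm.neg, padicNorm_inv_prime]
    exact hint.trans_lt (by exact_mod_cast hp.out.one_lt)
  rw [← add_neg_cancel_right (bernoulli (2 * k)) (p : ℚ)⁻¹, padicNorm.add_eq_max_of_ne hlt.ne,
    max_eq_right hlt.le, padicNorm.neg, padicNorm_inv_prime]

theorem padicNorm_bernoulli_le_prime (i : ℕ) : padicNorm p (bernoulli i) ≤ p := by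
  have hp1 : (1 : ℚ) ≤ p := by exact_mod_cast hp.out.one_lt.le
  obtain ⟨k, rfl | rfl⟩ := Nat.even_or_odd' i
  · rcases k.eq_zero_or_pos with rfl | hk
    · simpa using hp1
    set ε : ℚ := if (p - 1) ∣ 2 * k then (p : ℚ)⁻¹ else 0
    have hε : padicNorm p ε ≤ p := by
      unfold ε; split_ifs <;> simp [padicNorm_inv_prime]
    calc padicNorm p (bernoulli (2 * k)) = padicNorm p ((bernoulli (2 * k) + ε) - ε) := by
          rw [add_sub_cancel_right]
      _ ≤ p := padicNorm.sub.trans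
          (max_le ((padicNorm_bernoulli_two_mul_add_inv_le_one hk).trans hp1) hε)
  · rcases k.eq_zero_or_pos with rfl | hk
    · rw [bernoulli_one, padicNorm.div, padicNorm.neg, padicNorm.one]
      rcases eq_or_ne p 2 with rfl | hp2
      · rw [show ((2 : ℚ)) = ((2 : ℕ) : ℚ) by norm_num, padicNorm.padicNorm_p_of_prime]
        norm_num
      · have : Fact (Nat.Prime 2) := ⟨Nat.prime_two⟩
        rw [show ((2 : ℚ)) = ((2 : ℕ) : ℚ) by norm_num, padicNorm.padicNorm_of_prime_of_ne hp2]
        simpa using hp1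
    · rw [bernoulli_eq_zero_of_odd (odd_two_mul_add_one k) (by omega), padicNorm.zero]
      positivity

theorem padicNorm_bernoulli_le_padicNorm_of_not_sub_one_dvd {m : ℕ} (hm : 0 < m)
    (h : ¬ (p - 1) ∣ m) :
    padicNorm p (bernoulli m) ≤ padicNorm p m := by
  set e := padicValNat p m
  set K := e + 1 + padicValNat p (m + 1)
  have hP : (0 : ℚ) < p := by exact_mod_cast hp.out.pos
  have hpK : p ^ K ≠ 0 := pow_ne_zero _ hp.out.ne_zero
  have hN : padicNorm p (p ^ K : ℕ) = (p : ℚ) ^ (-(K : ℤ)) := by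
    rw [padicNorm_natCast_eq_zpow hpK, padicValNat.prime_pow]
  rw [bernoulli_eq_sum_range_pow_div_sub m hpK, padicNorm_natCast_eq_zpow hm.ne']
  refine padicNorm.sub.trans (max_le ?_ ?_)
  · have hS := padicNorm.dvd_iff_norm_le.mp <|
      (Int.natCast_pow p (K + e)).symm ▸ pow_add_padicValNat_dvd_sum_range_pow h (by omega)
    push_cast at hS
    rw [padicNorm.div, hN, div_le_iff₀ (zpow_pos hP _), ← zpow_add₀ hP.ne']
    exact hS.trans_eq (by rw [neg_add_rev])
  · refine padicNorm.sum_le' (fun i hi => ?_) (zpow_pos hP _).le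
    have hi := mem_range.mp hi
    have hpow : padicNorm p (((p ^ K : ℕ) : ℚ) ^ (m - i)) ≤ (p : ℚ) ^ (-(K : ℤ)) := by
      rw [IsAbsoluteValue.abv_pow (padicNorm p), ← hN]
      exact pow_le_of_le_one (padicNorm.nonneg _) (padicNorm.of_nat _) (by omega)
    have hm1 : padicNorm p ((m : ℚ) + 1) = (p : ℚ) ^ (-(padicValNat p (m + 1) : ℤ)) := by
      exact_mod_cast padicNorm_natCast_eq_zpow m.succ_ne_zero
    rw [padicNorm.div, padicNorm.mul, padicNorm.mul, hm1, div_le_iff₀ (zpow_pos hP _)]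
    calc _ ≤ (p : ℚ) * 1 * (p : ℚ) ^ (-(K : ℤ)) :=
          mul_le_mul (mul_le_mul (padicNorm_bernoulli_le_prime i) (padicNorm.of_nat _)
            (padicNorm.nonneg _) hP.le) hpow (padicNorm.nonneg _) (by positivity)
      _ = (p : ℚ) ^ (-(e : ℤ)) * (p : ℚ) ^ (-(padicValNat p (m + 1) : ℤ)) := by
          rw [mul_one, ← zpow_one_add₀ hP.ne', ← zpow_add₀ hP.ne']
          congr 1
          omega

end Bernoulli

/-- For every prime `p` and positive integer `n`: the `p`-adic valuation of the denominator
of `ζ(1 − 2n) = −B_{2n}/(2n)` is `0` if `(p − 1) ∤ 2n`, and is `1 + ν_p(2n)` if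
`(p − 1) ∣ 2n`. -/
theorem stmt_15 (p n : ℕ) (hp : p.Prime) (hn : 0 < n) :
    (¬ (p - 1) ∣ 2 * n →
      padicValNat p ((-(bernoulli (2 * n)) / ((2 * n : ℕ) : ℚ)).den) = 0) ∧
    ((p - 1) ∣ 2 * n →
      padicValNat p ((-(bernoulli (2 * n)) / ((2 * n : ℕ) : ℚ)).den)
        = 1 + padicValNat p (2 * n)) := by
  have : Fact p.Prime := ⟨hp⟩
  have h2n : padicNorm p (2 * n : ℕ) = (p : ℚ) ^ (-(padicValNat p (2 * n) : ℤ)) :=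
    padicNorm_natCast_eq_zpow (by omega)
  have hP : (0 : ℚ) < p := by exact_mod_cast hp.pos
  refine ⟨fun h => padicValNat_den_eq_zero_of_padicNorm_le_one ?_,
    fun h => padicValNat_den_eq_of_padicNorm_eq_pow ?_⟩
  · rw [padicNorm.div, padicNorm.neg, div_le_one (h2n ▸ zpow_pos hP _)]
    exact padicNorm_bernoulli_le_padicNorm_of_not_sub_one_dvd (by omega) h
  · rw [padicNorm.div, padicNorm.neg, padicNorm_bernoulli_two_mul_of_sub_one_dvd hn h, h2n,
      div_eq_mul_inv, ← zpow_neg, neg_neg, ← zpow_natCast, ← zpow_one_add₀ hP.ne']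
    norm_cast
end

section
/- Let K/ℚ_p be a finite extension with ring of integers A, uniformizer π, and ramification degree e, and suppose e/(p−1) is not a power of p. Let n be a positive integer and let I_n be the ideal of A generated by all a^n − 1 for a ∈ A with a ≡ 1 mod π. Then A/I_n ≅ A/π^i, where i = e·(ν_p(n) − ⌈log_p(e/(p−1))⌉) + p^{⌈log_p(e/(p−1))⌉} if ⌈log_p(e/(p−1))⌉ ≤ ν_p(n), and i = p^{ν_p(n)} otherwise. -/
/-!
Write `v` for the `π`-adic valuation. Since `(1 + x) ^ p - 1 = x ^ p + p * x + p * x ^ 2 * t`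
and `π ^ e ∥ p`, passing from `a` to `a ^ p` takes `v(a - 1)` to at least `min (p * v) (e + v)`,
with equality when the two terms differ; a power prime to `p` leaves `v(a - 1)` unchanged.
As `e / (p - 1)` is not a power of `p`, the two terms never coincide along the orbit of `1 + π`,
so `v((1 + π) ^ p ^ j - 1)` follows the recursion exactly (`p * v` while `j < c`, `e + v` after)
and is the least of all `v(a ^ p ^ j - 1)` with `a ≡ 1 mod π`. Writing `n = p ^ m * n'`,
`I_n` is therefore generated by `(1 + π) ^ n - 1`.
-/

open Finset

section Binomial

variable {R : Type*} [CommRing R]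

lemma exists_one_add_pow_sub_one_eq (x : R) (n : ℕ) :
    ∃ t, (1 + x) ^ n - 1 = n * x + x ^ 2 * t := by
  obtain ⟨t, ht⟩ := sq_dvd_add_pow_sub_sub x 1 n
  exact ⟨t, by rw [add_comm, ← ht]; ring⟩

lemma exists_one_add_pow_prime_sub_one_eq {p : ℕ} (hp : p.Prime) (x : R) :
    ∃ t, (1 + x) ^ p - 1 = x ^ p + p * x + p * x ^ 2 * t := by
  have h1 : 1 ∈ Ioo 0 p := mem_Ioo.mpr ⟨one_pos, hp.one_lt⟩
  obtain ⟨t, ht⟩ : x ^ 2 ∣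
      ∑ k ∈ (Ioo 0 p).erase 1, x ^ k * 1 ^ (p - k) * ((p.choose k / p : ℕ) : R) := by
    refine dvd_sum fun k hk => ?_
    obtain ⟨hk1, hk0, -⟩ : k ≠ 1 ∧ 0 < k ∧ k < p := by simpa using hk
    exact ((pow_dvd_pow x (by omega)).mul_right _).mul_right _
  refine ⟨t, ?_⟩
  rw [add_comm, add_pow_prime_eq' hp, ← add_sum_erase _ _ h1, ht]
  simp only [one_pow, pow_one, mul_one, Nat.choose_one_right, Nat.div_self hp.pos, Nat.cast_one]
  ring

end Binomial

-- the π-adic valuation of `(1 + π) ^ p ^ j - 1`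
def powSubOneVal (p e c j : ℕ) : ℕ := if c ≤ j then e * (j - c) + p ^ c else p ^ j

namespace powSubOneVal

variable {p e c j : ℕ}

@[simp] lemma zero_right : powSubOneVal p e c 0 = 1 := by
  unfold powSubOneVal
  split_ifs with h
  · simp [Nat.le_zero.mp h]
  · simp

lemma pos (hp : 0 < p) : 0 < powSubOneVal p e c j := by
  unfold powSubOneVal; split_ifs <;> positivity

lemma succ_of_lt (hj : j < c) : powSubOneVal p e c (j + 1) = p * powSubOneVal p e c j := by
  unfold powSubOneVal
  rw [if_neg (show ¬c ≤ j by omega)]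
  split_ifs with h
  · obtain rfl : c = j + 1 := by omega
    simp [pow_succ, mul_comm]
  · rw [pow_succ, mul_comm]

lemma succ_of_le (hj : c ≤ j) : powSubOneVal p e c (j + 1) = e + powSubOneVal p e c j := by
  unfold powSubOneVal
  rw [if_pos hj, if_pos (by omega), show j + 1 - c = j - c + 1 by omega]
  ring

lemma mul_lt_add (hcmin : ∀ k < c, ¬e ≤ (p - 1) * p ^ k) (hj : j < c) :
    p * powSubOneVal p e c j < e + powSubOneVal p e c j := by
  unfold powSubOneVal
  rw [if_neg (by omega)]
  have hlt := hcmin j hj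
  have hle : p * p ^ j ≤ (p - 1) * p ^ j + p ^ j :=
    (Nat.mul_le_mul_right _ ((by omega : p ≤ p - 1 + 1))).trans_eq (Nat.succ_mul _ _)
  omega

lemma add_lt_mul (hc : e < (p - 1) * p ^ c) (hj : c ≤ j) :
    e + powSubOneVal p e c j < p * powSubOneVal p e c j := by
  unfold powSubOneVal
  rw [if_pos hj]
  rcases p with _ | p
  · simp at hc
  · simp only [Nat.add_sub_cancel] at hc
    generalize e * (j - c) = x
    nlinarith

lemma succ_eq_min (hc : e < (p - 1) * p ^ c) (hcmin : ∀ k < c, ¬e ≤ (p - 1) * p ^ k) :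
    powSubOneVal p e c (j + 1) = min (p * powSubOneVal p e c j) (e + powSubOneVal p e c j) := by
  rcases lt_or_ge j c with hj | hj
  · rw [succ_of_lt hj, min_eq_left (mul_lt_add hcmin hj).le]
  · rw [succ_of_le hj, min_eq_right (add_lt_mul hc hj).le]

end powSubOneVal

section Uniformizer

variable {A : Type*} [CommRing A] {π a y z : A} {e v w : ℕ}

lemma isUnit_iff_not_dvd_of_maximal (hπ : ¬IsUnit π)
    (hmax : ∀ a : A, a ∉ Ideal.span {π} → IsUnit a) (a : A) : IsUnit a ↔ ¬π ∣ a :=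
  ⟨fun ha hdvd => hπ (isUnit_of_dvd_unit hdvd ha),
    fun h => hmax a (mt Ideal.mem_span_singleton.mp h)⟩

lemma Associated.add_of_pow_succ_dvd (hunit : ∀ a : A, IsUnit a ↔ ¬π ∣ a)
    (hy : Associated (π ^ v) y) (hz : π ^ (v + 1) ∣ z) : Associated (π ^ v) (y + z) := by
  obtain ⟨u, rfl⟩ := hy
  obtain ⟨s, rfl⟩ := hz
  have hπ : ¬IsUnit π := fun h => (hunit π).mp h dvd_rfl
  have hus : IsUnit (↑u + π * s) := (hunit _).mpr fun h =>
    hπ (isUnit_of_dvd_unit ((dvd_add_left (dvd_mul_right π s)).mp h) u.isUnit)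
  exact ⟨hus.unit, by simp only [IsUnit.unit_spec]; ring⟩

lemma associated_pow_of_dvd_of_not_dvd (hunit : ∀ a : A, IsUnit a ↔ ¬π ∣ a)
    (h : π ^ v ∣ y) (h' : ¬π ^ (v + 1) ∣ y) : Associated (π ^ v) y := by
  obtain ⟨u, rfl⟩ := h
  have hu : IsUnit u := (hunit u).mpr fun ⟨s, hs⟩ => h' ⟨s, by rw [hs]; ring⟩
  exact ⟨hu.unit, rfl⟩

lemma isUnit_natCast_of_coprime (hunit : ∀ a : A, IsUnit a ↔ ¬π ∣ a) {p k : ℕ}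
    (hπp : π ∣ (p : A)) (hk : k.Coprime p) : IsUnit (k : A) := by
  refine (hunit _).mpr fun hπk => (hunit π).mp ?_ dvd_rfl
  exact ((Nat.isCoprime_iff_coprime.mpr hk).intCast (R := A)).isUnit_of_dvd'
    (by exact_mod_cast hπk) (by exact_mod_cast hπp)

lemma associated_pow_sub_one_of_isUnit (hunit : ∀ a : A, IsUnit a ↔ ¬π ∣ a) {k : ℕ}
    (hk : IsUnit (k : A)) (hv : 0 < v) (ha : Associated (π ^ v) (a - 1)) :
    Associated (π ^ v) (a ^ k - 1) := by
  obtain ⟨t, ht⟩ := exists_one_add_pow_sub_one_eq (a - 1) k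
  rw [add_sub_cancel] at ht
  rw [ht]
  refine ((associated_isUnit_mul_right_iff hk).mpr ha).add_of_pow_succ_dvd hunit ?_
  calc π ^ (v + 1) ∣ π ^ (v * 2) := pow_dvd_pow π (by omega)
    _ = (π ^ v) ^ 2 := pow_mul π v 2
    _ ∣ (a - 1) ^ 2 * t := (pow_dvd_pow_of_dvd ha.dvd 2).mul_right t

lemma pow_dvd_pow_prime_sub_one {p : ℕ} (hp : p.Prime) (hpe : π ^ e ∣ (p : A))
    (ha : π ^ v ∣ a - 1) (hwp : w ≤ p * v) (hwe : w ≤ e + v) : π ^ w ∣ a ^ p - 1 := by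
  obtain ⟨t, ht⟩ := exists_one_add_pow_prime_sub_one_eq hp (a - 1)
  rw [add_sub_cancel] at ht
  have hlin : π ^ (e + v) ∣ p * (a - 1) := pow_add π e v ▸ mul_dvd_mul hpe ha
  have htop : π ^ (p * v) ∣ (a - 1) ^ p := by
    rw [mul_comm, pow_mul]; exact pow_dvd_pow_of_dvd ha p
  rw [ht, show (a - 1) ^ p + p * (a - 1) + p * (a - 1) ^ 2 * t
    = (a - 1) ^ p + p * (a - 1) * (1 + (a - 1) * t) by ring]
  exact dvd_add ((pow_dvd_pow π hwp).trans htop)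
    (((pow_dvd_pow π hwe).trans hlin).mul_right _)

lemma associated_pow_prime_sub_one_of_lt (hunit : ∀ a : A, IsUnit a ↔ ¬π ∣ a) {p : ℕ}
    (hp : p.Prime) (hpe : π ^ e ∣ (p : A)) (ha : Associated (π ^ v) (a - 1))
    (hlt : p * v < e + v) : Associated (π ^ (p * v)) (a ^ p - 1) := by
  obtain ⟨t, ht⟩ := exists_one_add_pow_prime_sub_one_eq hp (a - 1)
  rw [add_sub_cancel] at ht
  have hlin : π ^ (p * v + 1) ∣ p * (a - 1) :=
    (pow_dvd_pow π hlt).trans (pow_add π e v ▸ mul_dvd_mul hpe ha.dvd)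
  rw [ht, add_assoc, show p * (a - 1) + p * (a - 1) ^ 2 * t = p * (a - 1) * (1 + (a - 1) * t)
    by ring]
  refine Associated.add_of_pow_succ_dvd hunit ?_ (hlin.mul_right _)
  rw [mul_comm, pow_mul]
  exact ha.pow_pow

lemma associated_pow_prime_sub_one_of_gt (hunit : ∀ a : A, IsUnit a ↔ ¬π ∣ a) {p : ℕ}
    (hp : p.Prime) (hpe : Associated (π ^ e) (p : A)) (hv : 0 < v)
    (ha : Associated (π ^ v) (a - 1)) (hgt : e + v < p * v) :
    Associated (π ^ (e + v)) (a ^ p - 1) := by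
  obtain ⟨t, ht⟩ := exists_one_add_pow_prime_sub_one_eq hp (a - 1)
  rw [add_sub_cancel] at ht
  have htop : π ^ (e + v + 1) ∣ (a - 1) ^ p := by
    refine (pow_dvd_pow π hgt).trans ?_
    rw [mul_comm, pow_mul]; exact pow_dvd_pow_of_dvd ha.dvd p
  have hsq : π ^ (e + v + 1) ∣ p * (a - 1) ^ 2 * t := by
    refine ((pow_dvd_pow π (by omega : e + v + 1 ≤ e + v * 2)).trans ?_).mul_right t
    rw [pow_add, pow_mul]
    exact mul_dvd_mul hpe.dvd (pow_dvd_pow_of_dvd ha.dvd 2)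
  have hlin : Associated (π ^ (e + v)) (p * (a - 1)) := pow_add π e v ▸ hpe.mul_mul ha
  rw [ht, add_comm ((a - 1) ^ p), add_assoc]
  exact hlin.add_of_pow_succ_dvd hunit (dvd_add htop hsq)

variable {p c : ℕ}

lemma associated_pow_prime_pow_sub_one (hunit : ∀ a : A, IsUnit a ↔ ¬π ∣ a)
    (hp : p.Prime) (hpe : Associated (π ^ e) (p : A)) (hc : e < (p - 1) * p ^ c)
    (hcmin : ∀ k < c, ¬e ≤ (p - 1) * p ^ k) (ha : Associated π (a - 1)) (j : ℕ) :
    Associated (π ^ powSubOneVal p e c j) (a ^ p ^ j - 1) := by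
  induction j with
  | zero => simpa using ha
  | succ j ih =>
    rw [pow_succ, pow_mul]
    rcases lt_or_ge j c with hj | hj
    · rw [powSubOneVal.succ_of_lt hj]
      exact associated_pow_prime_sub_one_of_lt hunit hp hpe.dvd ih
        (powSubOneVal.mul_lt_add hcmin hj)
    · rw [powSubOneVal.succ_of_le hj]
      exact associated_pow_prime_sub_one_of_gt hunit hp hpe (powSubOneVal.pos hp.pos) ih
        (powSubOneVal.add_lt_mul hc hj)

lemma pow_dvd_pow_prime_pow_sub_one (hp : p.Prime) (hpe : π ^ e ∣ (p : A))
    (hc : e < (p - 1) * p ^ c) (hcmin : ∀ k < c, ¬e ≤ (p - 1) * p ^ k) (ha : π ∣ a - 1)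
    (j : ℕ) : π ^ powSubOneVal p e c j ∣ a ^ p ^ j - 1 := by
  induction j with
  | zero => simpa using ha
  | succ j ih =>
    rw [pow_succ, pow_mul]
    have h := powSubOneVal.succ_eq_min (j := j) hc hcmin
    exact pow_dvd_pow_prime_sub_one hp hpe ih (h ▸ min_le_left _ _) (h ▸ min_le_right _ _)

lemma span_pow_sub_one_eq_span_pow (hunit : ∀ a : A, IsUnit a ↔ ¬π ∣ a) (hp : p.Prime)
    (hpe : Associated (π ^ e) (p : A)) (he : 0 < e) (hc : e < (p - 1) * p ^ c)
    (hcmin : ∀ k < c, ¬e ≤ (p - 1) * p ^ k) {n : ℕ} (hn : n ≠ 0) :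
    Ideal.span {y : A | ∃ a : A, a - 1 ∈ Ideal.span {π} ∧ y = a ^ n - 1} =
      Ideal.span {π ^ powSubOneVal p e c (n.factorization p)} := by
  set m := n.factorization p
  have hfact : p ^ m * (n / p ^ m) = n := Nat.ordProj_mul_ordCompl_eq_self n p
  have hcop : (n / p ^ m).Coprime p :=
    Nat.coprime_comm.mp (hp.coprime_iff_not_dvd.mpr (Nat.not_dvd_ordCompl hp hn))
  refine le_antisymm (Ideal.span_le.mpr ?_) (Ideal.span_singleton_le_iff_mem _ |>.mpr ?_)
  · rintro _ ⟨a, ha, rfl⟩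
    rw [SetLike.mem_coe, Ideal.mem_span_singleton, ← hfact]
    exact (pow_dvd_pow_prime_pow_sub_one hp hpe.dvd hc hcmin
      (Ideal.mem_span_singleton.mp ha) m).trans (pow_one_sub_dvd_pow_mul_sub_one a _ _)
  · have hπp : π ∣ (p : A) := (dvd_pow_self π he.ne').trans hpe.dvd
    have hgen : Associated (π ^ powSubOneVal p e c m) ((1 + π) ^ n - 1) := by
      rw [← hfact, pow_mul]
      exact associated_pow_sub_one_of_isUnit hunit (isUnit_natCast_of_coprime hunit hπp hcop)
        (powSubOneVal.pos hp.pos)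
        (associated_pow_prime_pow_sub_one hunit hp hpe hc hcmin (by simp) m)
    exact Ideal.mem_of_dvd _ hgen.dvd' (Ideal.subset_span ⟨1 + π, by simp, rfl⟩)

end Uniformizer

theorem stmt_17_general {A : Type} [CommRing A] (π : A)
    (hπu : ¬ IsUnit π) (hmax : ∀ a : A, a ∉ Ideal.span {π} → IsUnit a)
    (p e : ℕ) (hp : p.Prime) (he : 0 < e)
    (hram : π ^ e ∣ (p : A) ∧ ¬ π ^ (e + 1) ∣ (p : A))
    (hpow : ∀ k : ℕ, e ≠ (p - 1) * p ^ k)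
    (c : ℕ) (hc : e ≤ (p - 1) * p ^ c) (hcmin : ∀ k, k < c → ¬ e ≤ (p - 1) * p ^ k)
    (n : ℕ) (hn : 0 < n) :
    Nonempty ((A ⧸ Ideal.span {y : A | ∃ a : A, a - 1 ∈ Ideal.span {π} ∧ y = a ^ n - 1}) ≃+*
      (A ⧸ Ideal.span {π ^ (if c ≤ n.factorization p then
          e * (n.factorization p - c) + p ^ c else p ^ (n.factorization p))})) := by
  have hunit := isUnit_iff_not_dvd_of_maximal hπu hmax
  have hpe := associated_pow_of_dvd_of_not_dvd hunit hram.1 hram.2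
  exact ⟨Ideal.quotEquivOfEq <|
    span_pow_sub_one_eq_span_pow hunit hp hpe he (hc.lt_of_ne (hpow c)) hcmin hn.ne'⟩

/-- Let `A` be the ring of integers of a finite extension `K/ℚ_p` (here: a complete
discrete valuation ring with uniformizer `π`) with ramification degree `e` (so `π^e ∥ p`),
and suppose `e/(p−1)` is not a power of `p`. Let `c = ⌈log_p(e/(p−1))⌉`, i.e. the least
natural number with `(p−1)·p^c ≥ e`. Let `n` be positive and `I_n` the ideal generated by
all `a^n − 1` with `a ≡ 1 mod π`. Then `A/I_n ≅ A/π^i`, where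
`i = e·(ν_p(n) − c) + p^c` if `c ≤ ν_p(n)`, and `i = p^{ν_p(n)}` otherwise. -/
theorem stmt_17 {A : Type} [CommRing A] [IsDomain A] (π : A) (hπ0 : π ≠ 0)
    (hπu : ¬ IsUnit π) (hmax : ∀ a : A, a ∉ Ideal.span {π} → IsUnit a)
    [IsAdicComplete (Ideal.span {π}) A]
    (p e : ℕ) (hp : p.Prime) (he : 0 < e)
    (hram : π ^ e ∣ (p : A) ∧ ¬ π ^ (e + 1) ∣ (p : A))
    (hpow : ∀ k : ℕ, e ≠ (p - 1) * p ^ k)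
    (c : ℕ) (hc : e ≤ (p - 1) * p ^ c) (hcmin : ∀ k, k < c → ¬ e ≤ (p - 1) * p ^ k)
    (n : ℕ) (hn : 0 < n) :
    Nonempty ((A ⧸ Ideal.span {y : A | ∃ a : A, a - 1 ∈ Ideal.span {π} ∧ y = a ^ n - 1}) ≃+*
      (A ⧸ Ideal.span {π ^ (if c ≤ n.factorization p then
          e * (n.factorization p - c) + p ^ c else p ^ (n.factorization p))})) :=
  stmt_17_general π hπu hmax p e hp he hram hpow c hc hcmin n hn
end
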